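/- arXiv:1401.2188 — 6 statements merged into one kernel-verified Lean document; each statement's English description precedes it below -/
import Mathlib

section
/- Let Γ : ℝⁿ → ℝ^N be a linear map and let (e₁,…,eₙ) be the canonical basis of ℝⁿ. Assume that (a) for every x ∈ Σ_s, ‖Γx‖₂ ≥ c₀‖x‖₂, and (b) for every j ∈ {1,…,n}, ‖Γe_j‖₂ ≤ c₁. Then, setting s₁ = ⌊c₀²(s−1)/(4c₁²)⌋ − 1, the matrix Γ satisfies the exact reconstruction property ER(s₁). -/
open MeasureTheory ProbabilityTheory Finset

/-- The ℓ¹ norm of a vector in ℝⁿ. -/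
noncomputable def l1norm {n : ℕ} (x : Fin n → ℝ) : ℝ := ∑ j, |x j|

/-- The Euclidean (ℓ²) norm of a vector in ℝⁿ. -/
noncomputable def l2norm {n : ℕ} (x : Fin n → ℝ) : ℝ := Real.sqrt (∑ j, (x j) ^ 2)

/-- `x` is `s`-sparse: it is supported on at most `s` coordinates. -/
def IsSparse {n : ℕ} (s : ℕ) (x : Fin n → ℝ) : Prop := Set.ncard {j | x j ≠ 0} ≤ s

/-- The exact reconstruction property of order `s`: for every `s`-sparse vector `x₀`,
the set of ℓ¹-minimizers over `{t | Γ t = Γ x₀}` is exactly `{x₀}`. -/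
def ER {N n : ℕ} (Γ : Matrix (Fin N) (Fin n) ℝ) (s : ℕ) : Prop :=
  ∀ x₀ : Fin n → ℝ, IsSparse s x₀ →
    {t : Fin n → ℝ | Γ.mulVec t = Γ.mulVec x₀ ∧
      ∀ t' : Fin n → ℝ, Γ.mulVec t' = Γ.mulVec x₀ → l1norm t ≤ l1norm t'} = {x₀}

lemma sign_mul_abs_real (x : ℝ) : Real.sign x * |x| = x := by
  rcases lt_trichotomy x 0 with hx | hx | hx
  · rw [Real.sign_of_neg hx, abs_of_neg hx]; ring
  · simp [hx]
  · rw [Real.sign_of_pos hx, abs_of_pos hx]; ring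

lemma sign_sq_le_one (x : ℝ) : (Real.sign x) ^ 2 ≤ 1 := by
  rcases Real.sign_apply_eq x with h | h | h <;> rw [h] <;> norm_num


/-- Null space property implies exact reconstruction. -/
lemma ER_of_NSP {N n : ℕ} (Γ : Matrix (Fin N) (Fin n) ℝ) (s : ℕ)
    (hnsp : ∀ h : Fin n → ℝ, Γ.mulVec h = 0 → h ≠ 0 → ∀ S : Finset (Fin n), S.card ≤ s →
      ∑ j ∈ S, |h j| < ∑ j ∈ Sᶜ, |h j|) : ER Γ s := by
  intro x₀ hx₀
  have key : ∀ t' : Fin n → ℝ, Γ.mulVec t' = Γ.mulVec x₀ → t' ≠ x₀ → l1norm x₀ < l1norm t' := by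
    intro t' hfeas hne
    set h : Fin n → ℝ := t' - x₀ with hh
    have hker : Γ.mulVec h = 0 := by
      rw [hh, Matrix.mulVec_sub, hfeas, sub_self]
    have hne0 : h ≠ 0 := sub_ne_zero.mpr hne
    set S : Finset (Fin n) := {j | x₀ j ≠ 0} with hS
    have hcard : S.card ≤ s := by
      have hset : {j | x₀ j ≠ 0} = (S : Set (Fin n)) := by
        ext j; simp [hS]
      have h5 := hx₀
      unfold IsSparse at h5
      rwa [hset, Set.ncard_coe_finset] at h5
    have hlt := hnsp h hker hne0 S hcard
    have h1 : l1norm x₀ = ∑ j ∈ S, |x₀ j| := by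
      rw [l1norm, ← Finset.sum_add_sum_compl S]
      have : ∑ j ∈ Sᶜ, |x₀ j| = 0 := by
        apply Finset.sum_eq_zero
        intro j hj
        simp only [hS, Finset.mem_compl, Finset.mem_filter, Finset.mem_univ, true_and,
          not_not] at hj
        simp [hj]
      rw [this, add_zero]
    have h2 : l1norm t' = ∑ j ∈ S, |x₀ j + h j| + ∑ j ∈ Sᶜ, |h j| := by
      rw [l1norm, ← Finset.sum_add_sum_compl S]
      congr 1
      · apply Finset.sum_congr rfl; intro j _; congr 1; simp [hh]
      · apply Finset.sum_congr rfl
        intro j hj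
        simp only [hS, Finset.mem_compl, Finset.mem_filter, Finset.mem_univ, true_and,
          not_not] at hj
        simp [hh, hj]
    have h3 : ∀ j ∈ S, |x₀ j| - |h j| ≤ |x₀ j + h j| := by
      intro j _
      have h6 := abs_sub_abs_le_abs_sub (x₀ j) (-(h j))
      rw [abs_neg, sub_neg_eq_add] at h6
      linarith
    have h4 : ∑ j ∈ S, (|x₀ j| - |h j|) ≤ ∑ j ∈ S, |x₀ j + h j| :=
      Finset.sum_le_sum h3
    rw [Finset.sum_sub_distrib] at h4
    rw [h1, h2]; linarith
  ext t
  simp only [Set.mem_setOf_eq, Set.mem_singleton_iff]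
  constructor
  · rintro ⟨hfeas, hmin⟩
    by_contra hne
    exact absurd (hmin x₀ rfl) (not_le.mpr (key t hfeas hne))
  · rintro rfl
    refine ⟨rfl, fun t' h' => ?_⟩
    rcases eq_or_ne t' t with rfl | hne
    · exact le_refl _
    · exact (key t' h' hne).le

/-- existence of top-m set -/
lemma exists_top {n : ℕ} (g : Fin n → ℝ) (m : ℕ) (hm : m ≤ n) :
    ∃ T : Finset (Fin n), T.card = m ∧ ∀ i ∈ T, ∀ j ∉ T, g j ≤ g i := by
  induction m with
  | zero => exact ⟨∅, rfl, by simp⟩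
  | succ m ih =>
    obtain ⟨T, hTc, hTd⟩ := ih (Nat.le_of_succ_le hm)
    have hne : (Tᶜ : Finset (Fin n)).Nonempty := by
      rw [← Finset.card_pos, Finset.card_compl, hTc, Fintype.card_fin]
      omega
    obtain ⟨j₀, hj₀, hj₀max⟩ := Finset.exists_max_image Tᶜ g hne
    have hj₀T : j₀ ∉ T := Finset.mem_compl.mp hj₀
    refine ⟨insert j₀ T, by rw [Finset.card_insert_of_notMem hj₀T, hTc], ?_⟩
    intro i hi j hj
    have hjT : j ∉ T := fun hjT => hj (Finset.mem_insert_of_mem hjT)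
    rcases Finset.mem_insert.mp hi with rfl | hiT
    · exact hj₀max j (Finset.mem_compl.mpr hjT)
    · exact hTd i hiT j hjT

/-- domination sum comparison -/
lemma sum_le_of_dom {n : ℕ} (g : Fin n → ℝ) (hg : ∀ j, 0 ≤ g j) (S T : Finset (Fin n))
    (hcard : S.card ≤ T.card) (hdom : ∀ i ∈ T, ∀ j ∉ T, g j ≤ g i) :
    ∑ j ∈ S, g j ≤ ∑ i ∈ T, g i := by
  have hsplitS : ∑ j ∈ S, g j = ∑ j ∈ S ∩ T, g j + ∑ j ∈ S \ T, g j :=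
    (Finset.sum_inter_add_sum_sdiff S T g).symm
  have hsplitT : ∑ i ∈ T, g i = ∑ i ∈ T ∩ S, g i + ∑ i ∈ T \ S, g i :=
    (Finset.sum_inter_add_sum_sdiff T S g).symm
  rw [hsplitS, hsplitT, Finset.inter_comm S T]
  have hcard2 : (S \ T).card ≤ (T \ S).card := by
    have h1 := Finset.card_inter_add_card_sdiff S T
    have h2 := Finset.card_inter_add_card_sdiff T S
    rw [Finset.inter_comm T S] at h2
    omega
  rcases Finset.eq_empty_or_nonempty (T \ S) with hTS | hTS
  · have : (S \ T) = ∅ := Finset.card_eq_zero.mp (by rw [hTS] at hcard2; simpa using hcard2)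
    rw [this, hTS]
  · obtain ⟨i₀, hi₀, hi₀min⟩ := Finset.exists_min_image (T \ S) g hTS
    have hi₀T : i₀ ∈ T := (Finset.mem_sdiff.mp hi₀).1
    have step1 : ∑ j ∈ S \ T, g j ≤ (S \ T).card * g i₀ := by
      calc ∑ j ∈ S \ T, g j ≤ ∑ _j ∈ S \ T, g i₀ :=
            Finset.sum_le_sum (fun j hj => hdom i₀ hi₀T j (Finset.mem_sdiff.mp hj).2)
        _ = (S \ T).card * g i₀ := by rw [Finset.sum_const, nsmul_eq_mul]
    have step2 : ((S \ T).card : ℝ) * g i₀ ≤ ((T \ S).card : ℝ) * g i₀ :=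
      mul_le_mul_of_nonneg_right (Nat.cast_le.mpr hcard2) (hg i₀)
    have step3 : ((T \ S).card : ℝ) * g i₀ ≤ ∑ i ∈ T \ S, g i := by
      calc ((T \ S).card : ℝ) * g i₀ = ∑ _i ∈ T \ S, g i₀ := by
            rw [Finset.sum_const, nsmul_eq_mul]
        _ ≤ ∑ i ∈ T \ S, g i := Finset.sum_le_sum (fun i hi => hi₀min i hi)
    linarith

/-- approximate Carathéodory, greedy version -/
lemma carath {n N : ℕ} (k : ℕ) (p : Fin n → ℝ) (hp0 : ∀ j, 0 ≤ p j) (hp1 : ∑ j, p j = 1)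
    (W : Fin n → Fin N → ℝ) (M : ℝ)
    (hmean : ∀ i, ∑ j, p j * W j i = 0)
    (hM : ∑ j, p j * (∑ i, (W j i) ^ 2) ≤ M) :
    ∃ l : Fin k → Fin n, (∀ a, p (l a) ≠ 0) ∧
      ∑ i, (∑ a, W (l a) i) ^ 2 ≤ k * M := by
  have hM0 : 0 ≤ M := le_trans (Finset.sum_nonneg fun j _ =>
    mul_nonneg (hp0 j) (Finset.sum_nonneg fun i _ => sq_nonneg _)) hM
  induction k with
  | zero =>
    refine ⟨Fin.elim0, fun a => a.elim0, ?_⟩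
    simp
  | succ k ih =>
    obtain ⟨l, hl, hlsum⟩ := ih
    set Sv : Fin N → ℝ := fun i => ∑ a, W (l a) i with hSv
    -- find good j
    have hex : ∃ j, p j ≠ 0 ∧ 2 * (∑ i, Sv i * W j i) + (∑ i, (W j i) ^ 2) ≤ M := by
      by_contra hcon
      push_neg at hcon
      have hlt : ∀ j, p j ≠ 0 → p j * M < p j * (2 * (∑ i, Sv i * W j i) + ∑ i, (W j i) ^ 2) := by
        intro j hj
        exact mul_lt_mul_of_pos_left (hcon j hj) (lt_of_le_of_ne (hp0 j) (Ne.symm hj))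
      have hsum_le : ∑ j, p j * M ≤ ∑ j, p j * (2 * (∑ i, Sv i * W j i) + ∑ i, (W j i) ^ 2) := by
        apply Finset.sum_le_sum
        intro j _
        rcases eq_or_ne (p j) 0 with h0 | h0
        · simp [h0]
        · exact (hlt j h0).le
      -- strict somewhere
      obtain ⟨j₀, -, hj₀⟩ : ∃ j ∈ Finset.univ, (0:ℝ) < p j := by
        by_contra hall
        push_neg at hall
        have : ∑ j, p j = 0 := Finset.sum_eq_zero fun j hj => le_antisymm (hall j hj) (hp0 j)
        rw [hp1] at this; norm_num at this
      have hstrict : ∑ j, p j * M < ∑ j, p j * (2 * (∑ i, Sv i * W j i) + ∑ i, (W j i) ^ 2) := by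
        apply Finset.sum_lt_sum
        · intro j _
          rcases eq_or_ne (p j) 0 with h0 | h0
          · simp [h0]
          · exact (hlt j h0).le
        · exact ⟨j₀, Finset.mem_univ j₀, hlt j₀ (ne_of_gt hj₀)⟩
      have hA : ∑ j : Fin n, p j * (2 * ∑ i, Sv i * W j i) = 0 := by
        have h1 : ∀ j : Fin n, p j * (2 * ∑ i, Sv i * W j i) = ∑ i, 2 * Sv i * (p j * W j i) := by
          intro j; rw [Finset.mul_sum, Finset.mul_sum]
          apply Finset.sum_congr rfl; intro i _; ring
        simp_rw [h1]
        rw [Finset.sum_comm]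
        apply Finset.sum_eq_zero; intro i _
        have h2 : ∑ j, 2 * Sv i * (p j * W j i) = 2 * Sv i * ∑ j, p j * W j i :=
          (Finset.mul_sum _ _ _).symm
        rw [h2, hmean i, mul_zero]
      have hsum_eq : ∑ j, p j * (2 * (∑ i, Sv i * W j i) + ∑ i, (W j i) ^ 2)
          = ∑ j, p j * ∑ i, (W j i) ^ 2 := by
        simp_rw [mul_add]
        rw [Finset.sum_add_distrib, hA, zero_add]
      have hlhs : ∑ j, p j * M = M := by rw [← Finset.sum_mul, hp1, one_mul]
      rw [hlhs, hsum_eq] at hstrict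
      exact absurd hM (not_le.mpr hstrict)
    obtain ⟨j, hjp, hjval⟩ := hex
    refine ⟨(Fin.snoc l j : Fin (k+1) → Fin n), ?_, ?_⟩
    · intro a
      refine Fin.lastCases ?_ ?_ a
      · rw [Fin.snoc_last]; exact hjp
      · intro a'; rw [Fin.snoc_castSucc]; exact hl a'
    · have hsum : ∀ i, ∑ a : Fin (k+1), W ((Fin.snoc l j : Fin (k+1) → Fin n) a) i
          = Sv i + W j i := by
        intro i
        rw [Fin.sum_univ_castSucc]
        simp only [Fin.snoc_castSucc, Fin.snoc_last, hSv]
      simp_rw [hsum]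
      have hexp : ∑ i, (Sv i + W j i) ^ 2
          = ∑ i, (Sv i) ^ 2 + (2 * (∑ i, Sv i * W j i) + ∑ i, (W j i) ^ 2) := by
        rw [Finset.mul_sum, ← Finset.sum_add_distrib, ← Finset.sum_add_distrib]
        apply Finset.sum_congr rfl; intro i _; ring
      rw [hexp]
      push_cast
      linarith

set_option maxHeartbeats 2000000 in
/-- The main kernel estimate / null space property. -/
lemma NSP_main {N n : ℕ} (Γ : Matrix (Fin N) (Fin n) ℝ) (s : ℕ) (c₀ c₁ : ℝ)
    (hc₀ : 0 < c₀) (hc₁ : 0 < c₁)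
    (ha : ∀ x : Fin n → ℝ, IsSparse s x → c₀ * l2norm x ≤ l2norm (Γ.mulVec x))
    (hb : ∀ j : Fin n, l2norm (Γ.mulVec (Pi.single j 1)) ≤ c₁)
    -- helpers proven elsewhere, assumed here:
    (exists_top : ∀ (g : Fin n → ℝ) (m : ℕ), m ≤ n →
      ∃ T : Finset (Fin n), T.card = m ∧ ∀ i ∈ T, ∀ j ∉ T, g j ≤ g i)
    (sum_le_of_dom : ∀ (g : Fin n → ℝ), (∀ j, 0 ≤ g j) → ∀ (S T : Finset (Fin n)),
      S.card ≤ T.card → (∀ i ∈ T, ∀ j ∉ T, g j ≤ g i) → ∑ j ∈ S, g j ≤ ∑ i ∈ T, g i)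
    (carath : ∀ (k : ℕ) (p : Fin n → ℝ), (∀ j, 0 ≤ p j) → (∑ j, p j = 1) →
      ∀ (W : Fin n → Fin N → ℝ) (M : ℝ), (∀ i, ∑ j, p j * W j i = 0) →
      (∑ j, p j * (∑ i, (W j i) ^ 2) ≤ M) →
      ∃ l : Fin k → Fin n, (∀ a, p (l a) ≠ 0) ∧ ∑ i, (∑ a, W (l a) i) ^ 2 ≤ k * M) :
    ∀ h : Fin n → ℝ, Γ.mulVec h = 0 → h ≠ 0 →
      ∀ S : Finset (Fin n), S.card ≤ (⌊c₀ ^ 2 * ((s : ℝ) - 1) / (4 * c₁ ^ 2)⌋₊ - 1) →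
      ∑ j ∈ S, |h j| < ∑ j ∈ Sᶜ, |h j| := by
  intro h hker hne S hScard
  set s₁ : ℕ := ⌊c₀ ^ 2 * ((s : ℝ) - 1) / (4 * c₁ ^ 2)⌋₊ - 1 with hs₁def
  -- n ≥ 1
  rcases Nat.eq_zero_or_pos n with hn0 | hn
  · exfalso; apply hne; subst hn0; exact funext fun x => x.elim0
  -- trivial case s₁ = 0
  rcases Nat.eq_zero_or_pos s₁ with h10 | h11
  · have hSempty : S = ∅ := Finset.card_eq_zero.mp (by omega)
    subst hSempty
    simp only [Finset.sum_empty, Finset.compl_empty]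
    obtain ⟨j₀, hj₀⟩ := Function.ne_iff.mp hne
    apply Finset.sum_pos' (fun j _ => abs_nonneg _)
    exact ⟨j₀, Finset.mem_univ j₀, abs_pos.mpr hj₀⟩
  -- main case
  by_contra hcon
  push_neg at hcon
  -- arithmetic consequences of the floor hypothesis
  have hF : ⌊c₀ ^ 2 * ((s : ℝ) - 1) / (4 * c₁ ^ 2)⌋₊ = s₁ + 1 := by omega
  have hxnn : 0 ≤ c₀ ^ 2 * ((s : ℝ) - 1) / (4 * c₁ ^ 2) := by
    by_contra hx
    push_neg at hx
    rw [Nat.floor_of_nonpos hx.le] at hF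
    omega
  have hfl : (s₁ : ℝ) + 1 ≤ c₀ ^ 2 * ((s : ℝ) - 1) / (4 * c₁ ^ 2) := by
    have := Nat.floor_le hxnn
    rw [hF] at this
    push_cast at this
    linarith
  have hden : (0:ℝ) < 4 * c₁ ^ 2 := by positivity
  have hKey : 4 * c₁ ^ 2 * ((s₁ : ℝ) + 1) ≤ c₀ ^ 2 * ((s : ℝ) - 1) := by
    rw [le_div_iff₀ hden] at hfl
    linarith
  have hs₁R : (1:ℝ) ≤ (s₁:ℝ) := by exact_mod_cast h11
  -- c₀ ≤ c₁
  have hsR : (1:ℝ) < (s:ℝ) := by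
    by_contra hs
    push_neg at hs
    have h1 : c₀ ^ 2 * ((s:ℝ) - 1) ≤ 0 :=
      mul_nonpos_of_nonneg_of_nonpos (sq_nonneg c₀) (by linarith)
    nlinarith [mul_pos hc₁ hc₁, mul_nonneg (mul_nonneg (by norm_num : (0:ℝ) ≤ 4)
      (sq_nonneg c₁)) (by linarith : (0:ℝ) ≤ (s₁:ℝ) - 1)]
  have hs1n : 1 ≤ s := by exact_mod_cast Nat.one_lt_cast.mp (by exact_mod_cast hsR) |>.le
  have hc01 : c₀ ≤ c₁ := by
    set j₀ : Fin n := ⟨0, hn⟩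
    set e₀ : Fin n → ℝ := Pi.single j₀ 1 with he₀
    have hsp : IsSparse s e₀ := by
      have hsub : {j | e₀ j ≠ 0} ⊆ {j₀} := by
        intro j hj
        simp only [Set.mem_singleton_iff]
        by_contra hjne
        exact hj (by rw [he₀]; exact Pi.single_eq_of_ne (M := fun _ => ℝ) hjne 1)
      calc Set.ncard {j | e₀ j ≠ 0} ≤ Set.ncard {j₀} :=
            Set.ncard_le_ncard hsub (Set.finite_singleton j₀)
        _ = 1 := Set.ncard_singleton j₀
        _ ≤ s := hs1n
    have hnorm : l2norm e₀ = 1 := by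
      rw [l2norm]
      have : ∑ j, (e₀ j) ^ 2 = 1 := by
        rw [Finset.sum_eq_single j₀]
        · simp [he₀]
        · intro j _ hjne
          rw [he₀]
          rw [Pi.single_eq_of_ne (M := fun _ => ℝ) hjne 1]; ring
        · intro habs; exact absurd (Finset.mem_univ j₀) habs
      rw [this, Real.sqrt_one]
    calc c₀ = c₀ * l2norm e₀ := by rw [hnorm, mul_one]
      _ ≤ l2norm (Γ.mulVec e₀) := ha _ hsp
      _ = l2norm (Γ.mulVec (Pi.single j₀ 1)) := by rw [he₀]
      _ ≤ c₁ := hb j₀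
  -- s ≥ 4 s₁ + 5
  have hs5 : 4 * s₁ + 5 ≤ s := by
    have hr : ((4 * s₁ + 5 : ℕ) : ℝ) ≤ (s : ℝ) := by
      push_cast
      nlinarith [hKey, mul_pos hc₀ hc₀, pow_le_pow_left₀ hc₀.le hc01 2,
        mul_nonneg (sub_nonneg.mpr (pow_le_pow_left₀ hc₀.le hc01 2))
          (by linarith : (0:ℝ) ≤ (s₁:ℝ) + 1)]
    exact_mod_cast hr
  set k : ℕ := s - s₁ with hkdef
  have hk1 : 1 ≤ k := by omega
  have hks : (k : ℝ) = (s : ℝ) - (s₁ : ℝ) := by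
    rw [hkdef]; push_cast [Nat.cast_sub (by omega : s₁ ≤ s)]; ring
  set t : ℕ := min s₁ n with htdef
  obtain ⟨T, hTcard, hTdom⟩ := exists_top (fun j => |h j|) t (min_le_right _ _)
  have ht1 : 1 ≤ t := by omega
  have hScardT : S.card ≤ T.card := by
    rw [hTcard, htdef]
    have h1 : S.card ≤ n := by
      have := Finset.card_le_univ S
      simpa using this
    omega
  set L : ℝ := ∑ j ∈ Tᶜ, |h j| with hLdef
  have hL0 : 0 ≤ L := Finset.sum_nonneg fun j _ => abs_nonneg _
  set Q2 : ℝ := ∑ i ∈ T, (h i) ^ 2 with hQ2def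
  have hQ20 : 0 ≤ Q2 := Finset.sum_nonneg fun i _ => sq_nonneg _
  set Q : ℝ := Real.sqrt Q2 with hQdef
  have hQ2pos : 0 < Q2 := by
    rcases lt_or_eq_of_le hQ20 with hlt | heq
    · exact hlt
    · exfalso
      apply hne
      have hT0 : ∀ i ∈ T, h i = 0 := by
        intro i hi
        have := (Finset.sum_eq_zero_iff_of_nonneg (fun i _ => sq_nonneg (h i))).mp heq.symm i hi
        exact pow_eq_zero_iff (by norm_num) |>.mp this
      funext j
      by_cases hj : j ∈ T
      · exact hT0 j hj
      · obtain ⟨i₀, hi₀⟩ : T.Nonempty := Finset.card_pos.mp (by omega)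
        have := hTdom i₀ hi₀ j hj
        rw [hT0 i₀ hi₀] at this
        simp only [abs_zero] at this
        exact abs_eq_zero.mp (le_antisymm this (abs_nonneg _))
  have hQpos : 0 < Q := Real.sqrt_pos.mpr hQ2pos
  -- case L = 0 : h is supported in T, hence sparse, hence zero
  rcases eq_or_lt_of_le hL0 with hLz | hLpos
  · exfalso
    have hsupp : ∀ j ∉ T, h j = 0 := by
      intro j hj
      have := (Finset.sum_eq_zero_iff_of_nonneg (fun j _ => abs_nonneg (h j))).mp hLz.symm j
        (Finset.mem_compl.mpr hj)
      exact abs_eq_zero.mp this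
    have hsp : IsSparse s h := by
      have hsub : {j | h j ≠ 0} ⊆ (T : Set (Fin n)) := by
        intro j hj
        by_contra hjT
        exact hj (hsupp j (fun hmem => hjT hmem))
      calc Set.ncard {j | h j ≠ 0} ≤ Set.ncard (T : Set (Fin n)) :=
            Set.ncard_le_ncard hsub T.finite_toSet
        _ = T.card := Set.ncard_coe_finset T
        _ ≤ s := by omega
    have := ha h hsp
    rw [hker] at this
    have hz : l2norm (0 : Fin N → ℝ) = 0 := by simp [l2norm]
    rw [hz] at this
    have hl2 : l2norm h = 0 := le_antisymm (by nlinarith [Real.sqrt_nonneg (∑ j, (h j)^2)])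
      (Real.sqrt_nonneg _)
    have : Q2 ≤ ∑ j, (h j) ^ 2 :=
      Finset.sum_le_sum_of_subset_of_nonneg (Finset.subset_univ T) (fun j _ _ => sq_nonneg _)
    rw [l2norm] at hl2
    have := Real.sqrt_eq_zero'.mp hl2
    nlinarith
  -- main case: L > 0
  have hLne : L ≠ 0 := ne_of_gt hLpos
  set p : Fin n → ℝ := fun j => if j ∈ T then 0 else |h j| / L with hpdef
  have hp0 : ∀ j, 0 ≤ p j := by
    intro j
    rw [hpdef]
    dsimp only
    split
    · exact le_refl 0
    · positivity
  have hp1 : ∑ j, p j = 1 := by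
    rw [hpdef, ← Finset.sum_add_sum_compl T]
    have h1 : ∑ j ∈ T, (if j ∈ T then (0:ℝ) else |h j| / L) = 0 :=
      Finset.sum_eq_zero fun j hj => if_pos hj
    have h2 : ∑ j ∈ Tᶜ, (if j ∈ T then (0:ℝ) else |h j| / L) = ∑ j ∈ Tᶜ, |h j| / L :=
      Finset.sum_congr rfl fun j hj => if_neg (Finset.mem_compl.mp hj)
    rw [h1, h2, zero_add, ← Finset.sum_div, ← hLdef, div_self hLne]
  set u : Fin n → ℝ := fun j => if j ∈ T then 0 else -h j with hudef
  set hT : Fin n → ℝ := fun j => if j ∈ T then h j else 0 with hTdef2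
  have hEq : h = hT - u := by
    funext j
    rw [Pi.sub_apply, hTdef2, hudef]
    dsimp only
    by_cases hj : j ∈ T
    · rw [if_pos hj, if_pos hj]; ring
    · rw [if_neg hj, if_neg hj]; ring
  have hGam : Γ.mulVec hT = Γ.mulVec u := by
    have h0 := hker
    rw [hEq, Matrix.mulVec_sub] at h0
    exact sub_eq_zero.mp h0
  -- the vectors Z j and W j
  set Z : Fin n → Fin n → ℝ := fun j m => if m = j then L * Real.sign (u j) else 0 with hZdef
  set B : Fin N → ℝ := Γ.mulVec u with hBdef
  set A : Fin n → Fin N → ℝ := fun j => Γ.mulVec (Z j) with hAdef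
  set W : Fin n → Fin N → ℝ := fun j i => A j i - B i with hWdef
  have hAfor : ∀ j, A j = fun i => (L * Real.sign (u j)) * (Γ i j) := by
    intro j
    funext i
    rw [hAdef]
    dsimp only
    rw [hZdef]
    simp only [Matrix.mulVec, dotProduct, mul_ite, mul_zero, Finset.sum_ite_eq',
      Finset.mem_univ, if_pos]
    ring
  have hpz : ∀ j, p j * (L * Real.sign (u j)) = u j := by
    intro j
    rw [hpdef, hudef]
    dsimp only
    by_cases hj : j ∈ T
    · simp [hj]
    · rw [if_neg hj, if_neg hj]
      calc |h j| / L * (L * Real.sign (-h j))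
          = Real.sign (-h j) * |(-h j)| * (L / L) := by rw [abs_neg]; ring
        _ = -h j := by rw [div_self hLne, mul_one, sign_mul_abs_real]
  have hsumA : ∀ i, ∑ j, p j * A j i = B i := by
    intro i
    have h1 : ∀ j, p j * A j i = u j * Γ i j := by
      intro j
      rw [hAfor j]
      dsimp only
      conv_rhs => rw [← hpz j]
      ring
    simp_rw [h1]
    rw [hBdef]
    simp only [Matrix.mulVec, dotProduct]
    apply Finset.sum_congr rfl
    intro j _
    ring
  have hmean : ∀ i, ∑ j, p j * W j i = 0 := by
    intro i
    rw [hWdef]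
    dsimp only
    simp_rw [mul_sub]
    rw [Finset.sum_sub_distrib, hsumA i, ← Finset.sum_mul, hp1, one_mul, sub_self]
  -- column norm bound
  have hcol : ∀ j : Fin n, ∑ i, (Γ i j) ^ 2 ≤ c₁ ^ 2 := by
    intro j
    have h1 := hb j
    rw [l2norm] at h1
    have h2 : ∑ i, (Γ.mulVec (Pi.single j 1) i) ^ 2 = ∑ i, (Γ i j) ^ 2 := by
      apply Finset.sum_congr rfl
      intro i _
      rw [Matrix.mulVec_single]
      simp
    rw [h2] at h1
    have h3 : 0 ≤ ∑ i, (Γ i j) ^ 2 := Finset.sum_nonneg fun i _ => sq_nonneg _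
    nlinarith [Real.sq_sqrt h3, Real.sqrt_nonneg (∑ i, (Γ i j) ^ 2)]
  have hM : ∑ j, p j * (∑ i, (W j i) ^ 2) ≤ c₁ ^ 2 * L ^ 2 := by
    have hexp : ∀ j, ∑ i, (W j i) ^ 2
        = ∑ i, (A j i) ^ 2 - 2 * (∑ i, A j i * B i) + ∑ i, (B i) ^ 2 := by
      intro j
      rw [hWdef]
      dsimp only
      rw [Finset.mul_sum, ← Finset.sum_sub_distrib, ← Finset.sum_add_distrib]
      apply Finset.sum_congr rfl
      intro i _
      ring
    have hstep : ∑ j, p j * (∑ i, (W j i) ^ 2)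
        = ∑ j, p j * (∑ i, (A j i) ^ 2) - ∑ i, (B i) ^ 2 := by
      simp_rw [hexp]
      have h4 : ∀ j, p j * (∑ i, (A j i) ^ 2 - 2 * (∑ i, A j i * B i) + ∑ i, (B i) ^ 2)
          = p j * (∑ i, (A j i) ^ 2) - 2 * (p j * ∑ i, A j i * B i) + p j * ∑ i, (B i) ^ 2 := by
        intro j; ring
      simp_rw [h4]
      rw [Finset.sum_add_distrib, Finset.sum_sub_distrib]
      have h5 : ∑ j, p j * ∑ i, A j i * B i = ∑ i, (B i) ^ 2 := by
        have h6 : ∀ j, p j * ∑ i, A j i * B i = ∑ i, B i * (p j * A j i) := by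
          intro j
          rw [Finset.mul_sum]
          apply Finset.sum_congr rfl
          intro i _
          ring
        simp_rw [h6]
        rw [Finset.sum_comm]
        apply Finset.sum_congr rfl
        intro i _
        rw [← Finset.mul_sum, hsumA i]
        ring
      have h7 : ∑ j, p j * ∑ i, (B i) ^ 2 = ∑ i, (B i) ^ 2 := by
        rw [← Finset.sum_mul, hp1, one_mul]
      have h5' : ∑ j, 2 * (p j * ∑ i, A j i * B i) = 2 * ∑ i, (B i) ^ 2 := by
        rw [← Finset.mul_sum, h5]
      rw [h5', h7]
      ring
    have hAbound : ∀ j, p j * (∑ i, (A j i) ^ 2) ≤ p j * (L ^ 2 * c₁ ^ 2) := by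
      intro j
      apply mul_le_mul_of_nonneg_left _ (hp0 j)
      have h8 : ∑ i, (A j i) ^ 2 = (L * Real.sign (u j)) ^ 2 * ∑ i, (Γ i j) ^ 2 := by
        rw [hAfor j]
        dsimp only
        rw [Finset.mul_sum]
        apply Finset.sum_congr rfl
        intro i _
        ring
      rw [h8]
      have h9 : (L * Real.sign (u j)) ^ 2 ≤ L ^ 2 := by
        have := sign_sq_le_one (u j)
        nlinarith [sq_nonneg L]
      calc (L * Real.sign (u j)) ^ 2 * ∑ i, (Γ i j) ^ 2
          ≤ L ^ 2 * ∑ i, (Γ i j) ^ 2 := by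
            apply mul_le_mul_of_nonneg_right h9
            exact Finset.sum_nonneg fun i _ => sq_nonneg _
        _ ≤ L ^ 2 * c₁ ^ 2 := mul_le_mul_of_nonneg_left (hcol j) (sq_nonneg L)
    have hB2 : 0 ≤ ∑ i, (B i) ^ 2 := Finset.sum_nonneg fun i _ => sq_nonneg _
    calc ∑ j, p j * (∑ i, (W j i) ^ 2)
        = ∑ j, p j * (∑ i, (A j i) ^ 2) - ∑ i, (B i) ^ 2 := hstep
      _ ≤ ∑ j, p j * (L ^ 2 * c₁ ^ 2) := by
          have := Finset.sum_le_sum (fun j (_ : j ∈ Finset.univ) => hAbound j)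
          linarith
      _ = c₁ ^ 2 * L ^ 2 := by rw [← Finset.sum_mul, hp1, one_mul]; ring
  -- apply approximate Caratheodory
  obtain ⟨l, hlp, hlsum⟩ := carath k p hp0 hp1 W (c₁ ^ 2 * L ^ 2) hmean hM
  have hlT : ∀ a, l a ∉ T := by
    intro a hmem
    apply hlp a
    rw [hpdef]
    exact if_pos hmem
  -- the test vector x
  set x : Fin n → ℝ := fun m => (k : ℝ) * hT m - ∑ a, Z (l a) m with hxdef
  -- x is s sparse
  have hZoff : ∀ a m, m ≠ l a → Z (l a) m = 0 := by
    intro a m hm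
    rw [hZdef]
    dsimp only
    rw [if_neg hm]
  have hxsupp : {m | x m ≠ 0} ⊆ ((T ∪ Finset.image l Finset.univ : Finset (Fin n)) : Set (Fin n)) := by
    intro m hm
    simp only [Set.mem_setOf_eq] at hm
    by_contra hmem
    apply hm
    rw [Finset.coe_union, Set.mem_union] at hmem
    push_neg at hmem
    obtain ⟨hmT, hml⟩ := hmem
    have hmT' : m ∉ T := by simpa using hmT
    have h1 : hT m = 0 := by rw [hTdef2]; exact if_neg hmT'
    have h2 : ∀ a, Z (l a) m = 0 := by
      intro a
      apply hZoff
      intro heq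
      apply hml
      rw [heq]
      simp only [Finset.coe_image, Set.mem_image]
      exact ⟨a, by simp⟩
    rw [hxdef]
    dsimp only
    rw [h1, Finset.sum_eq_zero (fun a _ => h2 a)]
    ring
  have hxsparse : IsSparse s x := by
    calc Set.ncard {m | x m ≠ 0}
        ≤ Set.ncard ((T ∪ Finset.image l Finset.univ : Finset (Fin n)) : Set (Fin n)) :=
          Set.ncard_le_ncard hxsupp (Finset.finite_toSet _)
      _ = (T ∪ Finset.image l Finset.univ).card := Set.ncard_coe_finset _
      _ ≤ T.card + (Finset.image l Finset.univ).card := Finset.card_union_le _ _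
      _ ≤ t + k := by
          have := Finset.card_image_le (f := l) (s := Finset.univ)
          simp only [Finset.card_univ, Fintype.card_fin] at this
          omega
      _ ≤ s := by omega
  -- Γ x is small
  have hGamx : ∀ i, Γ.mulVec x i = -(∑ a, W (l a) i) := by
    intro i
    have hxeq : x = (k : ℝ) • hT - ∑ a, Z (l a) := by
      funext m
      rw [hxdef]
      simp [Finset.sum_apply]
    rw [hxeq, Matrix.mulVec_sub, Matrix.mulVec_smul]
    have hmv : Γ.mulVec (∑ a, Z (l a)) = ∑ a, Γ.mulVec (Z (l a)) := by
      rw [← Matrix.mulVecLin_apply, map_sum]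
      simp [Matrix.mulVecLin_apply]
    rw [hmv]
    have hsumW : ∑ a, W (l a) i = ∑ a, A (l a) i - (k : ℝ) * B i := by
      rw [hWdef]
      dsimp only
      rw [Finset.sum_sub_distrib, Finset.sum_const, Finset.card_univ, Fintype.card_fin,
        nsmul_eq_mul]
    rw [hsumW]
    simp only [Pi.sub_apply, Pi.smul_apply, Finset.sum_apply, smul_eq_mul]
    rw [hGam]
    rw [hBdef, hAdef]
    ring
  have hGamx2 : ∑ i, (Γ.mulVec x i) ^ 2 ≤ (k : ℝ) * (c₁ ^ 2 * L ^ 2) := by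
    have h1 : ∀ i, (Γ.mulVec x i) ^ 2 = (∑ a, W (l a) i) ^ 2 := by
      intro i
      rw [hGamx i, neg_pow]
      ring
    simp_rw [h1]
    exact hlsum
  -- lower bound on x over T
  have hxT : ∀ m ∈ T, x m = (k : ℝ) * h m := by
    intro m hm
    rw [hxdef]
    dsimp only
    have h1 : hT m = h m := by rw [hTdef2]; exact if_pos hm
    have h2 : ∀ a, Z (l a) m = 0 := fun a => hZoff a m (fun heq => hlT a (heq ▸ hm))
    rw [h1, Finset.sum_eq_zero (fun a _ => h2 a)]
    ring
  have hxlow : (k : ℝ) ^ 2 * Q2 ≤ ∑ m, (x m) ^ 2 := by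
    calc (k : ℝ) ^ 2 * Q2 = ∑ m ∈ T, ((k:ℝ) * h m) ^ 2 := by
          rw [hQ2def, Finset.mul_sum]
          apply Finset.sum_congr rfl
          intro m _
          ring
      _ = ∑ m ∈ T, (x m) ^ 2 := Finset.sum_congr rfl fun m hm => by rw [hxT m hm]
      _ ≤ ∑ m, (x m) ^ 2 :=
          Finset.sum_le_sum_of_subset_of_nonneg (Finset.subset_univ T) fun m _ _ => sq_nonneg _
  -- main chain
  have hchain : c₀ * ((k : ℝ) * Q) ≤ Real.sqrt k * c₁ * L := by
    have h1 := ha x hxsparse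
    have h2 : l2norm (Γ.mulVec x) ≤ Real.sqrt k * c₁ * L := by
      rw [l2norm]
      calc Real.sqrt (∑ i, (Γ.mulVec x i) ^ 2) ≤ Real.sqrt ((k : ℝ) * (c₁ ^ 2 * L ^ 2)) :=
            Real.sqrt_le_sqrt hGamx2
        _ = Real.sqrt k * c₁ * L := by
            rw [Real.sqrt_mul (Nat.cast_nonneg k),
              show c₁ ^ 2 * L ^ 2 = (c₁ * L) ^ 2 by ring,
              Real.sqrt_sq (by positivity)]
            ring
    have h3 : (k : ℝ) * Q ≤ l2norm x := by
      rw [l2norm]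
      calc (k : ℝ) * Q = Real.sqrt ((k : ℝ) ^ 2 * Q2) := by
            rw [Real.sqrt_mul (sq_nonneg _), Real.sqrt_sq (Nat.cast_nonneg k), hQdef]
        _ ≤ Real.sqrt (∑ m, (x m) ^ 2) := Real.sqrt_le_sqrt hxlow
    calc c₀ * ((k : ℝ) * Q) ≤ c₀ * l2norm x := mul_le_mul_of_nonneg_left h3 hc₀.le
      _ ≤ l2norm (Γ.mulVec x) := h1
      _ ≤ Real.sqrt k * c₁ * L := h2
  -- bound L by sqrt(s₁) * Q
  have hLQ : L ≤ Real.sqrt s₁ * Q := by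
    have hdomsq : ∀ i ∈ T, ∀ j ∉ T, (h j) ^ 2 ≤ (h i) ^ 2 := by
      intro i hi j hj
      have := hTdom i hi j hj
      nlinarith [abs_nonneg (h j), abs_nonneg (h i), sq_abs (h j), sq_abs (h i)]
    have h1 : L ≤ ∑ j ∈ Sᶜ, |h j| := by
      have h2 : ∑ j ∈ S, |h j| ≤ ∑ i ∈ T, |h i| :=
        sum_le_of_dom (fun j => |h j|) (fun j => abs_nonneg _) S T hScardT hTdom
      have h3 := Finset.sum_add_sum_compl S (fun j => |h j|)
      have h4 := Finset.sum_add_sum_compl T (fun j => |h j|)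
      rw [hLdef]
      linarith
    have h5 : L ≤ ∑ j ∈ S, |h j| := le_trans h1 hcon
    have h6 : (∑ j ∈ S, |h j|) ^ 2 ≤ (S.card : ℝ) * ∑ j ∈ S, (h j) ^ 2 := by
      have := Finset.sum_mul_sq_le_sq_mul_sq S (fun _ => (1:ℝ)) (fun j => |h j|)
      simp only [one_mul, one_pow] at this
      calc (∑ j ∈ S, |h j|) ^ 2 ≤ (∑ _j ∈ S, (1:ℝ)) * ∑ j ∈ S, |h j| ^ 2 := this
        _ = (S.card : ℝ) * ∑ j ∈ S, (h j) ^ 2 := by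
            rw [Finset.sum_const, nsmul_eq_mul, mul_one]
            congr 1
            exact Finset.sum_congr rfl fun j _ => sq_abs (h j)
    have h7 : ∑ j ∈ S, (h j) ^ 2 ≤ Q2 := by
      rw [hQ2def]
      exact sum_le_of_dom (fun j => (h j) ^ 2) (fun j => sq_nonneg _) S T hScardT hdomsq
    have h8 : L ^ 2 ≤ (s₁ : ℝ) * Q2 := by
      have h9 : (S.card : ℝ) ≤ (s₁ : ℝ) := Nat.cast_le.mpr hScard
      nlinarith [Finset.sum_nonneg (fun j (_ : j ∈ S) => abs_nonneg (h j)), h5, h6, h7, h9,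
        Finset.sum_nonneg (fun j (_ : j ∈ S) => sq_nonneg (h j))]
    calc L = Real.sqrt (L ^ 2) := (Real.sqrt_sq hL0).symm
      _ ≤ Real.sqrt ((s₁ : ℝ) * Q2) := Real.sqrt_le_sqrt h8
      _ = Real.sqrt s₁ * Q := by rw [Real.sqrt_mul (Nat.cast_nonneg s₁), hQdef]
  -- final contradiction
  have hkpos : (0:ℝ) < (k : ℝ) := by exact_mod_cast hk1
  have hfinal : c₀ ^ 2 * (k : ℝ) ≤ c₁ ^ 2 * (s₁ : ℝ) := by
    have h1 : c₀ * ((k : ℝ) * Q) ≤ Real.sqrt k * c₁ * (Real.sqrt s₁ * Q) := by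
      calc c₀ * ((k : ℝ) * Q) ≤ Real.sqrt k * c₁ * L := hchain
        _ ≤ Real.sqrt k * c₁ * (Real.sqrt s₁ * Q) := by
            apply mul_le_mul_of_nonneg_left hLQ
            positivity
    have h2 : c₀ * (k : ℝ) ≤ Real.sqrt k * c₁ * Real.sqrt s₁ := by
      have h2a : c₀ * (k : ℝ) * Q ≤ Real.sqrt k * c₁ * Real.sqrt s₁ * Q := by
        calc c₀ * (k : ℝ) * Q = c₀ * ((k : ℝ) * Q) := by ring
          _ ≤ Real.sqrt k * c₁ * (Real.sqrt s₁ * Q) := h1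
          _ = Real.sqrt k * c₁ * Real.sqrt s₁ * Q := by ring
      exact le_of_mul_le_mul_right h2a hQpos
    have h3 : (c₀ * (k : ℝ)) ^ 2 ≤ (Real.sqrt k * c₁ * Real.sqrt s₁) ^ 2 := by
      apply pow_le_pow_left₀ (by positivity) h2
    have h4 : (Real.sqrt k * c₁ * Real.sqrt s₁) ^ 2 = (k : ℝ) * c₁ ^ 2 * (s₁ : ℝ) := by
      rw [mul_pow, mul_pow, Real.sq_sqrt (Nat.cast_nonneg k), Real.sq_sqrt (Nat.cast_nonneg s₁)]
    rw [h4] at h3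
    have h5 : c₀ ^ 2 * (k : ℝ) * (k : ℝ) ≤ c₁ ^ 2 * (s₁ : ℝ) * (k : ℝ) := by nlinarith
    exact le_of_mul_le_mul_right h5 hkpos
  have hcsq : c₀ ^ 2 ≤ c₁ ^ 2 := pow_le_pow_left₀ hc₀.le hc01 2
  nlinarith [hfinal, hKey, hks, hs₁R, mul_pos hc₁ hc₁,
    mul_nonneg (sub_nonneg.mpr hcsq) (by linarith : (0:ℝ) ≤ (s₁:ℝ) - 1),
    mul_nonneg (sq_nonneg c₁) (by linarith : (0:ℝ) ≤ (s₁:ℝ) - 1)]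

/-- **Theorem B.** If `‖Γx‖₂ ≥ c₀‖x‖₂` on `Σ_s` and the columns satisfy
`‖Γe_j‖₂ ≤ c₁`, then `Γ` satisfies exact reconstruction of order
`s₁ = ⌊c₀²(s-1)/(4c₁²)⌋ - 1`. -/
theorem stmt1 {N n : ℕ} (Γ : Matrix (Fin N) (Fin n) ℝ) (s : ℕ) (c₀ c₁ : ℝ)
    (hc₀ : 0 < c₀) (hc₁ : 0 < c₁)
    (ha : ∀ x : Fin n → ℝ, IsSparse s x → c₀ * l2norm x ≤ l2norm (Γ.mulVec x))
    (hb : ∀ j : Fin n, l2norm (Γ.mulVec (Pi.single j 1)) ≤ c₁) :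
    ER Γ (⌊c₀ ^ 2 * ((s : ℝ) - 1) / (4 * c₁ ^ 2)⌋₊ - 1) := by
  exact ER_of_NSP Γ _ (NSP_main Γ s c₀ c₁ hc₀ hc₁ ha hb
    (fun g m hm => exists_top g m hm)
    (fun g hg S T h1 h2 => sum_le_of_dom g hg S T h1 h2)
    (fun k p h0 h1 W M h2 h3 => carath k p h0 h1 W M h2 h3))
end

section
/- Let Γ be an N×n real matrix with kernel ker(Γ). If 0 < r < 1 and the set B₁ⁿ ∩ r·S^{n−1} does not intersect ker(Γ) (where B₁ⁿ is the unit ball of ℓ₁ⁿ and S^{n−1} the Euclidean unit sphere of ℝⁿ), then Γ satisfies the exact reconstruction property ER(⌊(2r)^{−2}⌋). -/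
open MeasureTheory Finset

/-- Any nonzero vector in the kernel satisfies `‖v‖₂ < r ‖v‖₁`. -/
lemma kernel_l2_lt {N n : ℕ} (Γ : Matrix (Fin N) (Fin n) ℝ) (r : ℝ) (hr0 : 0 < r)
    (h : ∀ x : Fin n → ℝ, l1norm x ≤ 1 → l2norm x = r → Γ.mulVec x ≠ 0)
    (v : Fin n → ℝ) (hv : Γ.mulVec v = 0) (hvne : v ≠ 0) : l2norm v < r * l1norm v := by
  have h2pos : 0 < l2norm v := by
    apply Real.sqrt_pos.2
    obtain ⟨j, hj⟩ := Function.ne_iff.1 hvne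
    exact Finset.sum_pos' (fun i _ => sq_nonneg _)
      ⟨j, Finset.mem_univ j, by simp at hj; positivity⟩
  set c := r / l2norm v with hc
  have hcpos : 0 < c := div_pos hr0 h2pos
  have hl2 : l2norm (c • v) = r := by
    unfold l2norm
    simp only [Pi.smul_apply, smul_eq_mul, mul_pow]
    rw [← Finset.mul_sum, Real.sqrt_mul (sq_nonneg c), Real.sqrt_sq hcpos.le, hc]
    unfold l2norm
    rw [div_mul_eq_mul_div, mul_div_assoc]
    rw [div_self (by unfold l2norm at h2pos; exact h2pos.ne'), mul_one]
  have hker : Γ.mulVec (c • v) = 0 := by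
    rw [Matrix.mulVec_smul, hv]; simp
  have hl1 : 1 < l1norm (c • v) := by
    by_contra hle
    exact h (c • v) (not_lt.1 hle) hl2 hker
  have heq : l1norm (c • v) = c * l1norm v := by
    unfold l1norm
    simp [abs_mul, abs_of_pos hcpos, Finset.mul_sum]
  rw [heq, hc, div_mul_eq_mul_div, lt_div_iff₀ h2pos, one_mul] at hl1
  linarith

/-- Null space property: a nonzero kernel vector has less than half of its ℓ¹ mass
on any set of cardinality at most `(2r)⁻²`. -/
lemma nsp {N n : ℕ} (Γ : Matrix (Fin N) (Fin n) ℝ) (r : ℝ) (hr0 : 0 < r)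
    (h : ∀ x : Fin n → ℝ, l1norm x ≤ 1 → l2norm x = r → Γ.mulVec x ≠ 0)
    (S : Finset (Fin n)) (hS : (S.card : ℝ) ≤ (2 * r)⁻¹ ^ 2)
    (v : Fin n → ℝ) (hv : Γ.mulVec v = 0) (hvne : v ≠ 0) :
    ∑ j ∈ S, |v j| < ∑ j ∈ Sᶜ, |v j| := by
  have hkey := kernel_l2_lt Γ r hr0 h v hv hvne
  have h2nn : 0 ≤ l2norm v := Real.sqrt_nonneg _
  have hcs : (∑ j ∈ S, |v j|) ^ 2 ≤ (S.card : ℝ) * (l2norm v) ^ 2 := by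
    have h1 : (∑ j ∈ S, |v j|) ^ 2 ≤ (S.card : ℝ) * ∑ j ∈ S, |v j| ^ 2 :=
      sq_sum_le_card_mul_sum_sq
    have h2 : ∑ j ∈ S, |v j| ^ 2 ≤ ∑ j, (v j) ^ 2 := by
      apply Finset.sum_le_sum_of_subset_of_nonneg (Finset.subset_univ S)
        (fun i _ _ => sq_nonneg _) |>.trans_eq
      exact Finset.sum_congr rfl fun j _ => by rw [sq_abs]
    have h3 : (l2norm v) ^ 2 = ∑ j, (v j) ^ 2 := by
      unfold l2norm
      exact Real.sq_sqrt (Finset.sum_nonneg fun j _ => sq_nonneg _)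
    rw [h3]
    calc (∑ j ∈ S, |v j|) ^ 2 ≤ (S.card : ℝ) * ∑ j ∈ S, |v j| ^ 2 := h1
      _ ≤ (S.card : ℝ) * ∑ j, (v j) ^ 2 := by
          apply mul_le_mul_of_nonneg_left _ (Nat.cast_nonneg _)
          calc ∑ j ∈ S, |v j| ^ 2 = ∑ j ∈ S, (v j) ^ 2 :=
                Finset.sum_congr rfl fun j _ => by rw [sq_abs]
            _ ≤ ∑ j, (v j) ^ 2 := Finset.sum_le_sum_of_subset_of_nonneg
                (Finset.subset_univ S) (fun i _ _ => sq_nonneg _)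
  have hsum_nn : 0 ≤ ∑ j ∈ S, |v j| := Finset.sum_nonneg fun j _ => abs_nonneg _
  have hbound : ∑ j ∈ S, |v j| ≤ Real.sqrt (S.card : ℝ) * l2norm v := by
    have := Real.sqrt_le_sqrt hcs
    rwa [Real.sqrt_sq hsum_nn, Real.sqrt_mul (Nat.cast_nonneg _),
      Real.sqrt_sq h2nn] at this
  have hrinv : (0:ℝ) < (2 * r)⁻¹ := by positivity
  have hsqS : Real.sqrt (S.card : ℝ) ≤ (2 * r)⁻¹ := by
    calc Real.sqrt (S.card : ℝ) ≤ Real.sqrt ((2 * r)⁻¹ ^ 2) := Real.sqrt_le_sqrt hS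
      _ = (2 * r)⁻¹ := Real.sqrt_sq hrinv.le
  have hhalf : ∑ j ∈ S, |v j| < (1/2) * l1norm v := by
    calc ∑ j ∈ S, |v j| ≤ Real.sqrt (S.card : ℝ) * l2norm v := hbound
      _ ≤ (2 * r)⁻¹ * l2norm v := mul_le_mul_of_nonneg_right hsqS h2nn
      _ < (2 * r)⁻¹ * (r * l1norm v) := by
          exact mul_lt_mul_of_pos_left hkey hrinv
      _ = (1/2) * l1norm v := by field_simp
  have hsplit : ∑ j ∈ S, |v j| + ∑ j ∈ Sᶜ, |v j| = l1norm v :=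
    Finset.sum_add_sum_compl S fun j => |v j|
  linarith

/-- If `0 < r < 1` and `B₁ⁿ ∩ r·S^{n-1}` does not meet `ker Γ`, then `Γ`
satisfies the exact reconstruction property of order `⌊(2r)⁻²⌋`. -/
theorem stmt5 {N n : ℕ} (Γ : Matrix (Fin N) (Fin n) ℝ) (r : ℝ) (hr0 : 0 < r) (hr1 : r < 1)
    (h : ∀ x : Fin n → ℝ, l1norm x ≤ 1 → l2norm x = r → Γ.mulVec x ≠ 0) :
    ER Γ ⌊(2 * r)⁻¹ ^ 2⌋₊ := by
  intro x₀ hx₀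
  set S : Finset (Fin n) := Finset.univ.filter (fun j => x₀ j ≠ 0) with hSdef
  have hcard : (S.card : ℝ) ≤ (2 * r)⁻¹ ^ 2 := by
    have h1 : {j | x₀ j ≠ 0}.ncard = S.card := by
      rw [← Set.ncard_coe_finset]; congr 1; ext j; simp [hSdef]
    have h2 : S.card ≤ ⌊(2 * r)⁻¹ ^ 2⌋₊ := h1 ▸ hx₀
    calc (S.card : ℝ) ≤ (⌊(2 * r)⁻¹ ^ 2⌋₊ : ℝ) := by exact_mod_cast h2
      _ ≤ (2 * r)⁻¹ ^ 2 := Nat.floor_le (by positivity)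
  have hx₀S : ∀ j ∈ Sᶜ, x₀ j = 0 := by
    intro j hj
    have := Finset.mem_compl.1 hj
    simp [hSdef] at this
    exact this
  have strict : ∀ t', Γ.mulVec t' = Γ.mulVec x₀ → t' ≠ x₀ → l1norm x₀ < l1norm t' := by
    intro t' ht' hne
    have hker : Γ.mulVec (t' - x₀) = 0 := by
      rw [Matrix.mulVec_sub, ht', sub_self]
    have hvne : t' - x₀ ≠ 0 := sub_ne_zero.2 hne
    have hnsp := nsp Γ r hr0 h S hcard _ hker hvne
    have e1 : l1norm x₀ = ∑ j ∈ S, |x₀ j| := by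
      unfold l1norm
      rw [← Finset.sum_add_sum_compl S fun j => |x₀ j|]
      have : ∑ j ∈ Sᶜ, |x₀ j| = 0 :=
        Finset.sum_eq_zero fun j hj => by rw [hx₀S j hj, abs_zero]
      rw [this, add_zero]
    have e2 : ∑ j ∈ Sᶜ, |(t' - x₀) j| = ∑ j ∈ Sᶜ, |t' j| :=
      Finset.sum_congr rfl fun j hj => by simp [hx₀S j hj]
    have e3 : ∑ j ∈ S, |x₀ j| ≤ ∑ j ∈ S, |t' j| + ∑ j ∈ S, |(t' - x₀) j| := by
      rw [← Finset.sum_add_distrib]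
      apply Finset.sum_le_sum
      intro j _
      have hx : x₀ j = t' j - (t' - x₀) j := by simp
      calc |x₀ j| = |t' j - (t' - x₀) j| := by rw [← hx]
        _ ≤ |t' j| + |(t' - x₀) j| := abs_sub _ _
    have e4 : l1norm t' = ∑ j ∈ S, |t' j| + ∑ j ∈ Sᶜ, |t' j| :=
      (Finset.sum_add_sum_compl S fun j => |t' j|).symm
    rw [e1, e4]
    calc ∑ j ∈ S, |x₀ j| ≤ ∑ j ∈ S, |t' j| + ∑ j ∈ S, |(t' - x₀) j| := e3
      _ < ∑ j ∈ S, |t' j| + ∑ j ∈ Sᶜ, |(t' - x₀) j| := by linarith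
      _ = ∑ j ∈ S, |t' j| + ∑ j ∈ Sᶜ, |t' j| := by rw [e2]
  ext t
  simp only [Set.mem_setOf_eq, Set.mem_singleton_iff]
  constructor
  · rintro ⟨ht, hmin⟩
    by_contra hne
    exact absurd (hmin x₀ rfl) (not_le.2 (strict t ht hne))
  · rintro rfl
    refine ⟨rfl, fun t' ht' => ?_⟩
    by_cases hne : t' = t
    · rw [hne]
    · exact (strict t' ht' hne).le
end

section
/- Let Γ : ℝⁿ → ℝ^N be a linear map, let 1 < s ≤ n, and assume that for every x ∈ Σ_s, ‖Γx‖₂ ≥ λ‖x‖₂. Then for every nonzero y ∈ ℝⁿ, writing μ_j = |y_j|/‖y‖₁ for 1 ≤ j ≤ n, one has ‖Γy‖₂² ≥ λ²‖y‖₂² − (‖y‖₁²/(s−1)) · ( Σ_{j=1}^n ‖Γe_j‖₂² μ_j − λ² ). -/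
open MeasureTheory ProbabilityTheory Finset

private lemma l2sq {n : ℕ} (x : Fin n → ℝ) : l2norm x ^ 2 = ∑ j, x j ^ 2 := by
  rw [l2norm, Real.sq_sqrt]
  positivity

private lemma l2nonneg {n : ℕ} (x : Fin n → ℝ) : 0 ≤ l2norm x := Real.sqrt_nonneg _

private lemma marg_one {n s : ℕ} (μ F : Fin n → ℝ) (hμ : ∑ j, μ j = 1) (i : Fin s) :
    ∑ ω : Fin s → Fin n, (∏ k, μ (ω k)) * F (ω i) = ∑ j, μ j * F j := by
  classical
  have h1 : ∀ ω : Fin s → Fin n,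
      (∏ k, μ (ω k)) * F (ω i) = ∏ k, (μ (ω k) * if k = i then F (ω k) else 1) := by
    intro ω
    rw [Finset.prod_mul_distrib, Finset.prod_ite_eq' Finset.univ i fun k => F (ω k)]
    simp
  simp_rw [h1]
  rw [← Fintype.prod_sum (fun k j => μ j * if k = i then F j else 1)]
  have h3 : ∀ k : Fin s, (∑ j, μ j * if k = i then F j else 1)
      = if k = i then ∑ j, μ j * F j else 1 := by
    intro k
    by_cases hk : k = i <;> simp [hk, hμ]
  simp_rw [h3]
  rw [Finset.prod_ite_eq' Finset.univ i fun _ => ∑ j, μ j * F j]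
  simp

private lemma marg_two {n s : ℕ} (μ F G : Fin n → ℝ) (hμ : ∑ j, μ j = 1)
    (i i' : Fin s) (hii : i ≠ i') :
    ∑ ω : Fin s → Fin n, (∏ k, μ (ω k)) * (F (ω i) * G (ω i'))
      = (∑ j, μ j * F j) * (∑ j, μ j * G j) := by
  classical
  have h1 : ∀ ω : Fin s → Fin n,
      (∏ k, μ (ω k)) * (F (ω i) * G (ω i'))
        = ∏ k, (μ (ω k) * ((if k = i then F (ω k) else 1) * (if k = i' then G (ω k) else 1))) := by
    intro ω
    rw [Finset.prod_mul_distrib, Finset.prod_mul_distrib,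
      Finset.prod_ite_eq' Finset.univ i (fun k => F (ω k)),
      Finset.prod_ite_eq' Finset.univ i' (fun k => G (ω k))]
    simp [mul_assoc]
  simp_rw [h1]
  rw [← Fintype.prod_sum
    (fun k j => μ j * ((if k = i then F j else 1) * (if k = i' then G j else 1)))]
  have h3 : ∀ k : Fin s, (∑ j, μ j * ((if k = i then F j else 1) * (if k = i' then G j else 1)))
      = (if k = i then ∑ j, μ j * F j else 1) * (if k = i' then ∑ j, μ j * G j else 1) := by
    intro k
    by_cases hk : k = i
    · subst hk
      simp [hii, hμ]
    · by_cases hk' : k = i' <;> simp [hk, hk', hμ, Ne.symm hii]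
  simp_rw [h3]
  rw [Finset.prod_mul_distrib,
    Finset.prod_ite_eq' Finset.univ i (fun _ => ∑ j, μ j * F j),
    Finset.prod_ite_eq' Finset.univ i' (fun _ => ∑ j, μ j * G j)]
  simp

private lemma keymoment {n : ℕ} (s : ℕ) (μ a : Fin n → ℝ) (hμ : ∑ j, μ j = 1) :
    ∑ ω : Fin s → Fin n, (∏ i, μ (ω i)) * (∑ i, a (ω i)) ^ 2
      = (s : ℝ) * (∑ j, μ j * a j ^ 2) + (s : ℝ) * ((s : ℝ) - 1) * (∑ j, μ j * a j) ^ 2 := by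
  classical
  set D := ∑ j, μ j * a j ^ 2 with hD
  set M := ∑ j, μ j * a j with hM
  calc ∑ ω : Fin s → Fin n, (∏ i, μ (ω i)) * (∑ i, a (ω i)) ^ 2
      = ∑ ω : Fin s → Fin n, ∑ p : Fin s × Fin s,
          (∏ k, μ (ω k)) * (a (ω p.1) * a (ω p.2)) := by
        refine Finset.sum_congr rfl fun ω _ => ?_
        rw [sq, Finset.sum_mul_sum, Finset.mul_sum]
        rw [Fintype.sum_prod_type]
        refine Finset.sum_congr rfl fun i _ => ?_
        rw [Finset.mul_sum]
    _ = ∑ p : Fin s × Fin s, ∑ ω : Fin s → Fin n,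
          (∏ k, μ (ω k)) * (a (ω p.1) * a (ω p.2)) := Finset.sum_comm
    _ = ∑ p : Fin s × Fin s, (if p.1 = p.2 then D else M ^ 2) := by
        refine Finset.sum_congr rfl fun p _ => ?_
        by_cases hp : p.1 = p.2
        · rw [if_pos hp, ← hp, hD]
          simp only [← pow_two]
          exact marg_one μ (fun j => a j ^ 2) hμ p.1
        · rw [if_neg hp, sq]
          exact marg_two μ a a hμ p.1 p.2 hp
    _ = (s : ℝ) * D + (s : ℝ) * ((s : ℝ) - 1) * M ^ 2 := by
        have h4 : ∀ p : Fin s × Fin s,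
            (if p.1 = p.2 then D else M ^ 2) = M ^ 2 + (if p.1 = p.2 then D - M ^ 2 else 0) := by
          intro p
          by_cases hp : p.1 = p.2 <;> simp [hp]
        simp_rw [h4]
        rw [Finset.sum_add_distrib, Finset.sum_const]
        rw [Fintype.sum_prod_type]
        simp only [Finset.sum_ite_eq, Finset.mem_univ, if_true]
        rw [Finset.sum_const, Finset.card_univ, Finset.card_univ]
        simp only [Fintype.card_prod, Fintype.card_fin, nsmul_eq_mul]
        push_cast
        ring

private lemma emoment {n sN : ℕ} (μ : Fin n → ℝ) (hμ : ∑ j, μ j = 1)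
    {α : Type*} [Fintype α] (A : α → Fin n → ℝ) :
    ∑ ω : Fin sN → Fin n, (∏ i, μ (ω i)) * (∑ t, (∑ i, A t (ω i)) ^ 2)
      = (sN : ℝ) * (∑ t, ∑ j, μ j * A t j ^ 2)
        + (sN : ℝ) * ((sN : ℝ) - 1) * (∑ t, (∑ j, μ j * A t j) ^ 2) := by
  classical
  simp_rw [Finset.mul_sum]
  rw [Finset.sum_comm]
  have h1 : ∀ t, ∑ ω : Fin sN → Fin n, (∏ i, μ (ω i)) * (∑ i, A t (ω i)) ^ 2
      = (sN : ℝ) * (∑ j, μ j * A t j ^ 2)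
        + (sN : ℝ) * ((sN : ℝ) - 1) * (∑ j, μ j * A t j) ^ 2 :=
    fun t => keymoment sN μ (A t) hμ
  simp_rw [h1, Finset.sum_add_distrib, ← Finset.mul_sum]

/-- **Maurey's empirical method lemma.** If `‖Γx‖₂ ≥ λ‖x‖₂` on `Σ_s`,
then for every nonzero `y`, with `μ_j = |y_j|/‖y‖₁`,
`‖Γy‖₂² ≥ λ²‖y‖₂² − (‖y‖₁²/(s−1))(Σ_j ‖Γe_j‖₂² μ_j − λ²)`. -/
theorem stmt9 {N n : ℕ} (Γ : Matrix (Fin N) (Fin n) ℝ) (s : ℕ) (hs1 : 1 < s) (hsn : s ≤ n)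
    (lam : ℝ) (hlam : 0 < lam)
    (h : ∀ x : Fin n → ℝ, IsSparse s x → lam * l2norm x ≤ l2norm (Γ.mulVec x))
    (y : Fin n → ℝ) (hy : y ≠ 0) :
    lam ^ 2 * l2norm y ^ 2 -
        l1norm y ^ 2 / ((s : ℝ) - 1) *
          ((∑ j, l2norm (Γ.mulVec (Pi.single j 1)) ^ 2 * (|y j| / l1norm y)) - lam ^ 2) ≤
      l2norm (Γ.mulVec y) ^ 2 := by
  classical
  have hs0 : (0:ℝ) < (s:ℝ) := by
    have : 0 < s := by omega
    exact_mod_cast this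
  have hs1' : (0:ℝ) < (s:ℝ) - 1 := by
    have : (2:ℕ) ≤ s := by omega
    have h2 : (2:ℝ) ≤ (s:ℝ) := by exact_mod_cast this
    linarith
  have hL1 : 0 < l1norm y := by
    obtain ⟨j, hj⟩ := Function.ne_iff.mp hy
    rw [l1norm]
    exact Finset.sum_pos' (fun k _ => abs_nonneg _) ⟨j, Finset.mem_univ j, abs_pos.mpr hj⟩
  set μ : Fin n → ℝ := fun j => |y j| / l1norm y with hμdef
  have hμ0 : ∀ j, 0 ≤ μ j := fun j => div_nonneg (abs_nonneg _) hL1.le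
  have hμsum : ∑ j, μ j = 1 := by
    rw [hμdef, ← Finset.sum_div]
    rw [show (∑ j, |y j|) = l1norm y from rfl]
    exact div_self hL1.ne'
  set z : Fin n → Fin n → ℝ := fun j k => if k = j then l1norm y * Real.sign (y j) else 0
    with hzdef
  have hsign : ∀ j, y j ≠ 0 → Real.sign (y j) ^ 2 = 1 := by
    intro j hj
    rcases lt_or_gt_of_ne hj with h' | h'
    · rw [Real.sign_of_neg h']; norm_num
    · rw [Real.sign_of_pos h']; norm_num
  have hμzero : ∀ j, y j = 0 → μ j = 0 := by
    intro j hj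
    rw [hμdef]
    simp [hj]
  have hsma : ∀ x : ℝ, Real.sign x * |x| = x := by
    intro x
    rcases lt_trichotomy x 0 with hx | hx | hx
    · rw [Real.sign_of_neg hx, abs_of_neg hx]; ring
    · simp [hx]
    · rw [Real.sign_of_pos hx, abs_of_pos hx]; ring
  have hμls : ∀ j, μ j * (l1norm y * Real.sign (y j)) = y j := by
    intro j
    have e : μ j * (l1norm y * Real.sign (y j)) = Real.sign (y j) * |y j| * (l1norm y / l1norm y) := by
      rw [hμdef]; ring
    rw [e, div_self hL1.ne', mul_one, hsma]
  -- each empirical vector is s-sparse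
  have hXsparse : ∀ ω : Fin s → Fin n, IsSparse s (fun k => ∑ i, z (ω i) k) := by
    intro ω
    have hsub : {k : Fin n | (∑ i, z (ω i) k) ≠ 0} ⊆ ↑(Finset.image ω Finset.univ) := by
      intro k hk
      simp only [Set.mem_setOf_eq] at hk
      by_contra hkim
      apply hk
      refine Finset.sum_eq_zero fun i _ => ?_
      have hne : k ≠ ω i := by
        intro he
        exact hkim (by simp [he, Finset.mem_coe])
      simp [hzdef, hne]
    show Set.ncard {k | (fun k => ∑ i, z (ω i) k) k ≠ 0} ≤ s
    calc Set.ncard {k | (fun k => ∑ i, z (ω i) k) k ≠ 0}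
        ≤ Set.ncard (↑(Finset.image ω Finset.univ) : Set (Fin n)) :=
          Set.ncard_le_ncard hsub (Finset.finite_toSet _)
      _ = (Finset.image ω Finset.univ).card := Set.ncard_coe_finset _
      _ ≤ (Finset.univ : Finset (Fin s)).card := Finset.card_image_le
      _ = s := by simp
  -- the pointwise inequality
  have hstep : ∀ ω : Fin s → Fin n,
      lam ^ 2 * (∑ k, (∑ i, z (ω i) k) ^ 2)
        ≤ ∑ a, (Γ.mulVec (fun k => ∑ i, z (ω i) k) a) ^ 2 := by
    intro ω
    have h1 := h (fun k => ∑ i, z (ω i) k) (hXsparse ω)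
    have h2 : (lam * l2norm (fun k => ∑ i, z (ω i) k)) ^ 2
        ≤ l2norm (Γ.mulVec (fun k => ∑ i, z (ω i) k)) ^ 2 :=
      pow_le_pow_left₀ (mul_nonneg hlam.le (l2nonneg _)) h1 2
    rw [mul_pow, l2sq, l2sq] at h2
    exact h2
  have hw0 : ∀ ω : Fin s → Fin n, 0 ≤ ∏ i, μ (ω i) :=
    fun ω => Finset.prod_nonneg fun i _ => hμ0 _
  have hEineq : ∑ ω : Fin s → Fin n,
        (∏ i, μ (ω i)) * (lam ^ 2 * ∑ k, (∑ i, z (ω i) k) ^ 2)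
      ≤ ∑ ω : Fin s → Fin n,
        (∏ i, μ (ω i)) * (∑ a, (Γ.mulVec (fun k => ∑ i, z (ω i) k) a) ^ 2) :=
    Finset.sum_le_sum fun ω _ => mul_le_mul_of_nonneg_left (hstep ω) (hw0 ω)
  -- evaluate the left-hand side
  have hLHS : ∑ ω : Fin s → Fin n,
        (∏ i, μ (ω i)) * (lam ^ 2 * ∑ k, (∑ i, z (ω i) k) ^ 2)
      = lam ^ 2 * ((s:ℝ) * l1norm y ^ 2
          + (s:ℝ) * ((s:ℝ) - 1) * (∑ k, y k ^ 2)) := by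
    have e1 : ∑ ω : Fin s → Fin n, (∏ i, μ (ω i)) * (lam ^ 2 * ∑ k, (∑ i, z (ω i) k) ^ 2)
        = lam ^ 2 * ∑ ω : Fin s → Fin n, (∏ i, μ (ω i)) * (∑ k, (∑ i, z (ω i) k) ^ 2) := by
      rw [Finset.mul_sum]
      refine Finset.sum_congr rfl fun ω _ => ?_
      ring
    rw [e1]
    have e2 := emoment (sN := s) μ hμsum (fun (k : Fin n) (j : Fin n) => z j k)
    rw [e2]
    have c1 : (∑ k, ∑ j, μ j * z j k ^ 2) = l1norm y ^ 2 := by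
      rw [Finset.sum_comm]
      have e3 : ∀ j, ∑ k, μ j * z j k ^ 2 = l1norm y ^ 2 * μ j := by
        intro j
        rw [Finset.sum_eq_single j]
        · by_cases hj : y j = 0
          · simp [hzdef, hμzero j hj]
          · have hzz : z j j = l1norm y * Real.sign (y j) := by simp [hzdef]
            rw [hzz, mul_pow, hsign j hj]
            ring
        · intro k _ hk
          simp [hzdef, hk]
        · simp
      simp_rw [e3]
      rw [← Finset.mul_sum, hμsum, mul_one]
    have c2 : (∑ k, (∑ j, μ j * z j k) ^ 2) = ∑ k, y k ^ 2 := by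
      refine Finset.sum_congr rfl fun k _ => ?_
      congr 1
      rw [Finset.sum_eq_single k]
      · have hzz : z k k = l1norm y * Real.sign (y k) := by simp [hzdef]
        rw [hzz]
        exact hμls k
      · intro j _ hj
        have hne : k ≠ j := hj.symm
        simp [hzdef, hne]
      · simp
    rw [c1, c2]
  -- evaluate the right-hand side
  have hmv : ∀ j a, Γ.mulVec (z j) a = Γ a j * (l1norm y * Real.sign (y j)) := by
    intro j a
    rw [Matrix.mulVec, dotProduct]
    rw [Finset.sum_eq_single j]
    · have hzz : z j j = l1norm y * Real.sign (y j) := by simp [hzdef]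
      rw [hzz]
    · intro k _ hk
      simp [hzdef, hk]
    · simp
  have hsingle : ∀ j a, Γ.mulVec (Pi.single j (1:ℝ)) a = Γ a j := by
    intro j a
    rw [Matrix.mulVec, dotProduct]
    rw [Finset.sum_eq_single j]
    · simp
    · intro k _ hk
      simp [Pi.single_apply, hk]
    · simp
  have hlin : ∀ (ω : Fin s → Fin n) (a : Fin N),
      Γ.mulVec (fun k => ∑ i, z (ω i) k) a = ∑ i, Γ.mulVec (z (ω i)) a := by
    intro ω a
    rw [Matrix.mulVec, dotProduct]
    simp_rw [Finset.mul_sum]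
    rw [Finset.sum_comm]
    refine Finset.sum_congr rfl fun i _ => ?_
    rw [Matrix.mulVec, dotProduct]
  have hRHS : ∑ ω : Fin s → Fin n,
        (∏ i, μ (ω i)) * (∑ a, (Γ.mulVec (fun k => ∑ i, z (ω i) k) a) ^ 2)
      = (s:ℝ) * (l1norm y ^ 2 * ∑ j, (∑ a, (Γ.mulVec (Pi.single j (1:ℝ)) a) ^ 2) * μ j)
        + (s:ℝ) * ((s:ℝ) - 1) * (∑ a, (Γ.mulVec y a) ^ 2) := by
    have e1 : ∀ ω : Fin s → Fin n, (∑ a, (Γ.mulVec (fun k => ∑ i, z (ω i) k) a) ^ 2)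
        = ∑ a, (∑ i, Γ.mulVec (z (ω i)) a) ^ 2 := by
      intro ω
      refine Finset.sum_congr rfl fun a _ => ?_
      rw [hlin]
    simp_rw [e1]
    have e2 := emoment (sN := s) μ hμsum (fun (a : Fin N) (j : Fin n) => Γ.mulVec (z j) a)
    rw [e2]
    have c1 : (∑ a, ∑ j, μ j * (Γ.mulVec (z j) a) ^ 2)
        = l1norm y ^ 2 * ∑ j, (∑ a, (Γ.mulVec (Pi.single j (1:ℝ)) a) ^ 2) * μ j := by
      rw [Finset.sum_comm, Finset.mul_sum]
      refine Finset.sum_congr rfl fun j _ => ?_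
      by_cases hj : y j = 0
      · simp [hmv, hj, hμzero j hj, Real.sign_zero]
      · simp_rw [hmv, hsingle]
        have e4 : ∑ a, μ j * (Γ a j * (l1norm y * Real.sign (y j))) ^ 2
            = (μ j * (l1norm y ^ 2 * Real.sign (y j) ^ 2)) * ∑ a, Γ a j ^ 2 := by
          rw [Finset.mul_sum]
          refine Finset.sum_congr rfl fun a _ => ?_
          ring
        rw [e4, hsign j hj]
        ring
    have c2 : (∑ a, (∑ j, μ j * Γ.mulVec (z j) a) ^ 2) = ∑ a, (Γ.mulVec y a) ^ 2 := by
      refine Finset.sum_congr rfl fun a _ => ?_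
      congr 1
      simp_rw [hmv]
      have e5 : ∀ j, μ j * (Γ a j * (l1norm y * Real.sign (y j))) = Γ a j * y j := by
        intro j
        calc μ j * (Γ a j * (l1norm y * Real.sign (y j)))
            = Γ a j * (μ j * (l1norm y * Real.sign (y j))) := by ring
          _ = Γ a j * y j := by rw [hμls j]
      simp_rw [e5]
      rw [Matrix.mulVec, dotProduct]
    rw [c1, c2]
  rw [hLHS, hRHS] at hEineq
  -- rewrite the goal
  simp only [l2sq]
  have hgoal : lam ^ 2 * (∑ k, y k ^ 2) -
      l1norm y ^ 2 / ((s : ℝ) - 1) *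
        ((∑ j, (∑ a, (Γ.mulVec (Pi.single j (1:ℝ)) a) ^ 2) * μ j) - lam ^ 2) ≤
      ∑ a, (Γ.mulVec y a) ^ 2 := by
    rw [sub_le_iff_le_add, ← sub_le_iff_le_add']
    rw [div_mul_eq_mul_div, le_div_iff₀ hs1']
    nlinarith [hEineq, hs0, hs1', sq_nonneg (l1norm y)]
  simpa [hμdef] using hgoal
end

section
/- Fix integers s, N ≤ n and a set J ⊆ {1,…,n} of cardinality at most s, and let Γ be an N×n real matrix. If v ∈ ℝⁿ is supported in J, ‖v‖₁ = 1, and Γv ∈ Γ·B₁^{Jᶜ} (where B₁^{Jᶜ} is the set of vectors in the unit ℓ₁-ball of ℝⁿ that are supported in the complement Jᶜ of J), then Γ does not satisfy the exact reconstruction property ER(s). -/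
open MeasureTheory ProbabilityTheory Finset

/-- If `v` is supported in `J`, `‖v‖₁ = 1` and `Γv ∈ Γ·B₁^{Jᶜ}`,
then `Γ` does not satisfy exact reconstruction of order `s`. -/
theorem stmt11 {N n : ℕ} (s : ℕ) (hs : s ≤ n) (hN : N ≤ n)
    (Γ : Matrix (Fin N) (Fin n) ℝ) (J : Finset (Fin n)) (hJ : J.card ≤ s)
    (v : Fin n → ℝ) (hsupp : ∀ j ∉ J, v j = 0) (hv1 : l1norm v = 1)
    (hmem : ∃ w : Fin n → ℝ, (∀ j ∈ J, w j = 0) ∧ l1norm w ≤ 1 ∧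
      Γ.mulVec v = Γ.mulVec w) :
    ¬ ER Γ s := by
  intro hER
  obtain ⟨w, hwJ, hw1, hΓ⟩ := hmem
  have hsparse : IsSparse s v := by
    have hsub : {j | v j ≠ 0} ⊆ (J : Set (Fin n)) := by
      intro j hj
      by_contra h
      exact hj (hsupp j h)
    calc Set.ncard {j | v j ≠ 0} ≤ (J : Set (Fin n)).ncard :=
          Set.ncard_le_ncard hsub (J : Set (Fin n)).toFinite
      _ = J.card := by simp [Set.ncard_coe_finset]
      _ ≤ s := hJ
  have hset := hER v hsparse
  have hvmem : v ∈ {t : Fin n → ℝ | Γ.mulVec t = Γ.mulVec v ∧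
      ∀ t' : Fin n → ℝ, Γ.mulVec t' = Γ.mulVec v → l1norm t ≤ l1norm t'} := by
    rw [hset]; rfl
  have hmin := hvmem.2
  have hwv : l1norm v ≤ l1norm w := hmin w hΓ.symm
  have hweq : l1norm w = 1 := le_antisymm hw1 (hv1 ▸ hwv)
  have hwmem : w ∈ {t : Fin n → ℝ | Γ.mulVec t = Γ.mulVec v ∧
      ∀ t' : Fin n → ℝ, Γ.mulVec t' = Γ.mulVec v → l1norm t ≤ l1norm t'} := by
    refine ⟨hΓ.symm, fun t' ht' => ?_⟩
    rw [hweq, ← hv1]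
    exact hmin t' ht'
  rw [hset] at hwmem
  have hwv' : w = v := hwmem
  have hv0 : v = 0 := by
    funext j
    by_cases hj : j ∈ J
    · rw [← hwv']; exact hwJ j hj
    · exact hsupp j hj
  rw [hv0] at hv1
  simp [l1norm] at hv1
end

section
/- Let 0 < δ < 1, R > 0, and let (ε_{ℓj})_{1≤ℓ≤N, 1≤j≤n} be independent symmetric {−1,1}-valued random variables and (η_{ℓj})_{1≤ℓ≤N, 1≤j≤n} be independent {0,1}-valued random variables with mean δ, with the ε's independent of the η's. Set z_{ℓj} = ε_{ℓj}(1 + R·η_{ℓj}), let v_j = Σ_{ℓ=1}^N z_{ℓj} f_ℓ for 2 ≤ j ≤ n, and let V = absconv(v_j : 2 ≤ j ≤ n). If (1 − (1−δ)^{N−1}·δ)^{n−1} ≤ 1/(4N), then with probability at least 3/4, for every 1 ≤ i ≤ N there exists y_i ∈ B_∞^N (the unit ball of ℓ_∞^N) such that y_i + R·f_i ∈ V. -/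
open MeasureTheory ProbabilityTheory Finset

/-- `absconv S`: the convex hull of `S ∪ (-S)`. -/
def absconv {N : ℕ} (S : Set (Fin N → ℝ)) : Set (Fin N → ℝ) := convexHull ℝ (S ∪ -S)

/-- With `z_{ℓj} = ε_{ℓj}(1 + R η_{ℓj})`, `v_j = Σ_ℓ z_{ℓj} f_ℓ` for
`j ≥ 2` (here: `j ≠ 0`) and `V = absconv(v_j : j ≥ 2)`, if
`(1 − (1−δ)^{N−1}δ)^{n−1} ≤ 1/(4N)` then with probability at least `3/4`, for every
`i ≤ N` there is `y_i ∈ B_∞^N` with `y_i + R f_i ∈ V`. -/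
theorem stmt13 (N n : ℕ) (hN : 1 ≤ N) (hn : 1 ≤ n) (δ R : ℝ)
    (hδ0 : 0 < δ) (hδ1 : δ < 1) (hR : 0 < R)
    (Ω : Type) [MeasurableSpace Ω] (P : Measure Ω) (hP : IsProbabilityMeasure P)
    (ε η : Fin N → Fin n → Ω → ℝ)
    (hmε : ∀ ℓ j, Measurable (ε ℓ j)) (hmη : ∀ ℓ j, Measurable (η ℓ j))
    -- the ε's are symmetric ±1 variables
    (hε : ∀ ℓ j, P {ω | ε ℓ j ω = 1} = 1 / 2 ∧ P {ω | ε ℓ j ω = -1} = 1 / 2)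
    -- the η's are {0,1}-valued with mean δ
    (hη : ∀ ℓ j, P {ω | η ℓ j ω = 1} = ENNReal.ofReal δ ∧
      P {ω | η ℓ j ω = 0} = ENNReal.ofReal (1 - δ))
    -- all the ε's and η's are jointly independent
    (hindep : iIndepFun
      (Sum.elim (fun q : Fin N × Fin n => ε q.1 q.2)
        (fun q : Fin N × Fin n => η q.1 q.2)) P)
    (hcond : (1 - (1 - δ) ^ (N - 1) * δ) ^ (n - 1) ≤ 1 / (4 * (N : ℝ))) :
    (3 : ENNReal) / 4 ≤
      P {ω | ∀ i : Fin N, ∃ y : Fin N → ℝ, (∀ ℓ, |y ℓ| ≤ 1) ∧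
        y + R • (Pi.single i 1 : Fin N → ℝ) ∈
          absconv {v | ∃ j : Fin n, j ≠ ⟨0, hn⟩ ∧
            v = fun ℓ => ε ℓ j ω * (1 + R * η ℓ j ω)}} := by
    classical
  set I := (Fin N × Fin n) ⊕ (Fin N × Fin n) with hI
  set F : I → Ω → ℝ := Sum.elim (fun q : Fin N × Fin n => ε q.1 q.2)
      (fun q : Fin N × Fin n => η q.1 q.2) with hF
  have hmF : ∀ k, Measurable (F k) := by rintro (q | q); exacts [hmε q.1 q.2, hmη q.1 q.2]
  set m : I → MeasurableSpace Ω := fun k =>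
    MeasurableSpace.comap (F k) inferInstance with hm
  have hiI : iIndep m P := hindep.iIndep
  have h_le : ∀ k, m k ≤ ‹MeasurableSpace Ω› := fun k => (hmF k).comap_le
  -- the key events
  set A : Fin N → Fin n → Set Ω :=
    fun i j => ⋂ ℓ, η ℓ j ⁻¹' {if ℓ = i then (1 : ℝ) else 0} with hA
  have hAmeas : ∀ i j, MeasurableSet (A i j) := fun i j =>
    MeasurableSet.iInter fun ℓ => (hmη ℓ j) (measurableSet_singleton _)
  set p : ℝ := δ * (1 - δ) ^ (N - 1) with hpdef
  have h1δ : (0:ℝ) ≤ 1 - δ := by linarith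
  have hp0 : 0 ≤ p := mul_nonneg hδ0.le (pow_nonneg h1δ _)
  have hp1 : p ≤ 1 := by
    have : (1 - δ) ^ (N - 1) ≤ 1 := pow_le_one₀ h1δ (by linarith)
    nlinarith
  -- probability of A i j
  have hPA : ∀ i j, P (A i j) = ENNReal.ofReal p := by
    intro i j
    set sfun : I → Set Ω := Sum.elim (fun _ => (Set.univ : Set Ω))
      (fun q => η q.1 q.2 ⁻¹' {if q.1 = i then (1:ℝ) else 0}) with hsfun
    set S : Finset I := Finset.univ.image (fun ℓ : Fin N => (Sum.inr (ℓ, j) : I)) with hS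
    have hinj : ∀ a ∈ (Finset.univ : Finset (Fin N)), ∀ b ∈ Finset.univ,
        (Sum.inr (a, j) : I) = Sum.inr (b, j) → a = b := by
      intro a _ b _ h; simpa using h
    have hmeasS : ∀ k ∈ S, MeasurableSet[(inferInstance : MeasurableSpace ℝ).comap (F k)] (sfun k) := by
      intro k hk
      simp only [hS, Finset.mem_image] at hk
      obtain ⟨ℓ, -, rfl⟩ := hk
      exact ⟨{if ℓ = i then (1:ℝ) else 0}, measurableSet_singleton _, rfl⟩
    have hbigcap : (⋂ k ∈ S, sfun k) = A i j := by
      ext ω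
      simp only [hS, Set.mem_iInter, Finset.mem_image, hA, Set.mem_preimage]
      constructor
      · intro h ℓ
        exact h (Sum.inr (ℓ, j)) ⟨ℓ, Finset.mem_univ ℓ, rfl⟩
      · rintro h k ⟨ℓ, -, rfl⟩
        exact h ℓ
    have hprod := hindep.meas_biInter (S := S) (s := sfun) hmeasS
    rw [hbigcap] at hprod
    rw [hprod, hS, Finset.prod_image hinj]
    have hfac : ∀ ℓ : Fin N, P (sfun (Sum.inr (ℓ, j)))
        = if ℓ = i then ENNReal.ofReal δ else ENNReal.ofReal (1 - δ) := by
      intro ℓ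
      by_cases hℓ : ℓ = i
      · simp only [hsfun, Sum.elim_inr, if_pos hℓ]
        exact (hη ℓ j).1
      · simp only [hsfun, Sum.elim_inr, if_neg hℓ]
        exact (hη ℓ j).2
    rw [Finset.prod_congr rfl (fun ℓ _ => hfac ℓ)]
    rw [← Finset.mul_prod_erase Finset.univ _ (Finset.mem_univ i), if_pos rfl]
    rw [Finset.prod_congr rfl (fun ℓ hℓ => if_neg (Finset.mem_erase.mp hℓ).1)]
    rw [Finset.prod_const, Finset.card_erase_of_mem (Finset.mem_univ i),
      Finset.card_univ, Fintype.card_fin]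
    rw [← ENNReal.ofReal_pow h1δ, ← ENNReal.ofReal_mul hδ0.le]
  have hPAc : ∀ i j, P ((A i j)ᶜ) = ENNReal.ofReal (1 - p) := by
    intro i j
    rw [prob_compl_eq_one_sub (hAmeas i j), hPA i j,
      ENNReal.ofReal_sub _ hp0, ENNReal.ofReal_one]
  -- independence across columns
  have key : ∀ (i : Fin N) (s : Finset (Fin n)),
      P (⋂ j ∈ s, (A i j)ᶜ) = ENNReal.ofReal (1 - p) ^ s.card := by
    intro i s
    induction s using Finset.induction_on with
    | empty => simp
    | @insert j s hj ih =>
      have hSet : (⋂ j' ∈ insert j s, (A i j')ᶜ) = (A i j)ᶜ ∩ ⋂ j' ∈ s, (A i j')ᶜ := by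
        simp [Set.biInter_insert]
      set Su : Set I := Set.range (fun ℓ : Fin N => (Sum.inr (ℓ, j) : I)) with hSu
      set Tu : Set I := {k : I | ∃ q : Fin N × Fin n, q.2 ∈ s ∧ k = Sum.inr q} with hTu
      have hd : Disjoint Su Tu := by
        rw [Set.disjoint_left]
        rintro k ⟨ℓ, rfl⟩ ⟨q, hq, hkq⟩
        injection hkq with h
        exact hj (by cases h; exact hq)
      have hInd : Indep (⨆ k ∈ Su, m k) (⨆ k ∈ Tu, m k) P :=
        indep_iSup_of_disjoint h_le hiI hd
      rw [Indep_iff] at hInd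
      have hmemA : ∀ (j' : Fin n) (u : Set I), (∀ ℓ : Fin N, (Sum.inr (ℓ, j') : I) ∈ u) →
          MeasurableSet[⨆ k ∈ u, m k] (A i j') := by
        intro j' u hu
        refine MeasurableSet.iInter fun ℓ => ?_
        have h1 : MeasurableSet[m (Sum.inr (ℓ, j'))]
            (η ℓ j' ⁻¹' {if ℓ = i then (1:ℝ) else 0}) :=
          ⟨{if ℓ = i then (1:ℝ) else 0}, measurableSet_singleton _, rfl⟩
        exact le_iSup₂ (f := fun k (_ : k ∈ u) => m k) (Sum.inr (ℓ, j')) (hu ℓ) _ h1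
      have hX : MeasurableSet[⨆ k ∈ Su, m k] ((A i j)ᶜ) :=
        (hmemA j Su (fun ℓ => ⟨ℓ, rfl⟩)).compl
      have hY : MeasurableSet[⨆ k ∈ Tu, m k] (⋂ j' ∈ s, (A i j')ᶜ) := by
        refine MeasurableSet.biInter (Set.to_countable _) fun j' hj' => ?_
        exact (hmemA j' Tu (fun ℓ => ⟨(ℓ, j'), hj', rfl⟩)).compl
      rw [hSet, hInd _ _ hX hY, ih, hPAc,
        Finset.card_insert_of_notMem hj, pow_succ]
      ring
  -- bad events
  set bad : Fin N → Set Ω := fun i => ⋂ j ∈ Finset.univ.erase (⟨0, hn⟩ : Fin n), (A i j)ᶜ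
    with hbad
  have hbadP : ∀ i, P (bad i) ≤ ENNReal.ofReal (1 / (4 * (N:ℝ))) := by
    intro i
    rw [hbad]
    rw [key i _]
    rw [Finset.card_erase_of_mem (Finset.mem_univ _), Finset.card_univ, Fintype.card_fin]
    rw [← ENNReal.ofReal_pow (by linarith)]
    refine ENNReal.ofReal_le_ofReal ?_
    calc (1 - p) ^ (n - 1) = (1 - (1-δ)^(N-1) * δ) ^ (n-1) := by rw [hpdef]; ring_nf
      _ ≤ 1 / (4 * (N:ℝ)) := hcond
  -- the almost sure event that the ε's are ±1
  set G : Set Ω := ⋂ ℓ, ⋂ j, (ε ℓ j ⁻¹' {1} ∪ ε ℓ j ⁻¹' {-1}) with hG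
  have hGmeas : MeasurableSet G :=
    MeasurableSet.iInter fun ℓ => MeasurableSet.iInter fun j =>
      ((hmε ℓ j) (measurableSet_singleton _)).union ((hmε ℓ j) (measurableSet_singleton _))
  have hGc : P Gᶜ = 0 := by
    rw [hG, Set.compl_iInter]
    refine measure_iUnion_null fun ℓ => ?_
    rw [Set.compl_iInter]
    refine measure_iUnion_null fun j => ?_
    have hdis : Disjoint (ε ℓ j ⁻¹' {1}) (ε ℓ j ⁻¹' {-1}) := by
      rw [Set.disjoint_left]
      intro ω h1 h2
      simp only [Set.mem_preimage, Set.mem_singleton_iff] at h1 h2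
      rw [h1] at h2; norm_num at h2
    have hu : P (ε ℓ j ⁻¹' {1} ∪ ε ℓ j ⁻¹' {-1}) = 1 := by
      rw [measure_union hdis ((hmε ℓ j) (measurableSet_singleton _))]
      have e1 : ε ℓ j ⁻¹' {1} = {ω | ε ℓ j ω = 1} := rfl
      have e2 : ε ℓ j ⁻¹' {-1} = {ω | ε ℓ j ω = -1} := rfl
      rw [e1, e2, (hε ℓ j).1, (hε ℓ j).2, ENNReal.add_halves]
    rw [prob_compl_eq_one_sub
      (((hmε ℓ j) (measurableSet_singleton _)).union ((hmε ℓ j) (measurableSet_singleton _))),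
      hu, tsub_self]
  -- the total bad set
  set Bad : Set Ω := (⋃ i, bad i) ∪ Gᶜ with hBad
  have hbadmeas : ∀ i, MeasurableSet (bad i) := fun i =>
    MeasurableSet.biInter (Set.to_countable _) fun j _ => (hAmeas i j).compl
  have hBadmeas : MeasurableSet Bad :=
    ((MeasurableSet.iUnion hbadmeas).union hGmeas.compl)
  have hBadP : P Bad ≤ 1 / 4 := by
    calc P Bad ≤ P (⋃ i, bad i) + P Gᶜ := measure_union_le _ _
    _ = P (⋃ i, bad i) := by rw [hGc, add_zero]
    _ ≤ ∑ i : Fin N, P (bad i) := measure_iUnion_fintype_le _ _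
    _ ≤ ∑ _i : Fin N, ENNReal.ofReal (1 / (4 * (N:ℝ))) :=
        Finset.sum_le_sum fun i _ => hbadP i
    _ = (N : ENNReal) * ENNReal.ofReal (1 / (4 * (N:ℝ))) := by
        rw [Finset.sum_const, Finset.card_univ, Fintype.card_fin, nsmul_eq_mul]
    _ = ENNReal.ofReal ((N:ℝ) * (1 / (4 * (N:ℝ)))) := by
        rw [ENNReal.ofReal_mul (by positivity), ENNReal.ofReal_natCast]
    _ = ENNReal.ofReal (1/4) := by
        congr 1
        have hNne : (N:ℝ) ≠ 0 := by positivity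
        field_simp
    _ = 1 / 4 := by rw [ENNReal.ofReal_div_of_pos (by norm_num)]; norm_num
  have hfinal : (3:ENNReal)/4 ≤ P Badᶜ := by
    rw [prob_compl_eq_one_sub hBadmeas]
    have h34 : (3:ENNReal)/4 = 1 - 1/4 := by
      refine ENNReal.eq_sub_of_add_eq (by norm_num) ?_
      rw [ENNReal.div_add_div_same]
      norm_num
      exact ENNReal.div_self (by norm_num) (by norm_num)
    rw [h34]
    exact tsub_le_tsub_left hBadP 1
  refine le_trans hfinal (measure_mono ?_)
  -- the deterministic part
  intro ω hω
  rw [hBad, Set.compl_union, compl_compl] at hω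
  obtain ⟨hω1, hωG⟩ := hω
  have hεpm : ∀ ℓ j, ε ℓ j ω = 1 ∨ ε ℓ j ω = -1 := by
    intro ℓ j
    have := Set.mem_iInter.mp (Set.mem_iInter.mp hωG ℓ) j
    rcases this with h | h
    · exact Or.inl h
    · exact Or.inr h
  intro i
  have hnbad : ω ∉ bad i := fun hc => hω1 (Set.mem_iUnion.mpr ⟨i, hc⟩)
  rw [hbad] at hnbad
  simp only [Set.mem_iInter, Set.mem_compl_iff, not_forall, not_not] at hnbad
  obtain ⟨j, hjmem, hjA⟩ := hnbad
  have hjne : j ≠ (⟨0, hn⟩ : Fin n) := (Finset.mem_erase.mp hjmem).1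
  have hηval : ∀ ℓ, η ℓ j ω = if ℓ = i then 1 else 0 := by
    intro ℓ
    have := Set.mem_iInter.mp hjA ℓ
    simpa using this
  refine ⟨fun ℓ => if ℓ = i then (1:ℝ) else ε i j ω * ε ℓ j ω, ?_, ?_⟩
  · intro ℓ
    by_cases hℓ : ℓ = i
    · simp [hℓ]
    · rcases hεpm i j with h1 | h1 <;> rcases hεpm ℓ j with h2 | h2 <;>
        simp [hℓ, h1, h2]
  · have hveq : ((fun ℓ => if ℓ = i then (1:ℝ) else ε i j ω * ε ℓ j ω)
        + R • (Pi.single i 1 : Fin N → ℝ))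
        = ε i j ω • (fun ℓ => ε ℓ j ω * (1 + R * η ℓ j ω)) := by
      funext ℓ
      simp only [Pi.add_apply, Pi.smul_apply, smul_eq_mul]
      by_cases hℓ : ℓ = i
      · subst hℓ
        rw [if_pos rfl, Pi.single_eq_same, hηval ℓ, if_pos rfl]
        rcases hεpm ℓ j with h | h <;> rw [h] <;> ring
      · rw [if_neg hℓ, Pi.single_eq_of_ne hℓ, hηval ℓ, if_neg hℓ]
        ring
    rw [hveq]
    rcases hεpm i j with h | h
    · rw [h, one_smul]
      exact subset_convexHull ℝ _ (Or.inl ⟨j, hjne, rfl⟩)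
    · rw [h, neg_one_smul]
      exact subset_convexHull ℝ _ (Or.inr (Set.neg_mem_neg.mpr ⟨j, hjne, rfl⟩))
end

section
/- There exists an absolute constant C for which the following holds. Let 0 < δ < 1 and R ≥ 1 with R⁴·δ ≤ 1. Let ε be a symmetric {−1,1}-valued random variable and η an independent {0,1}-valued random variable with mean δ, set z = ε(1 + R·η), and let X = (x₁,…,xₙ) be a random vector whose coordinates are independent copies of z. Then for every t ∈ ℝⁿ, E⟨X,t⟩⁴ ≤ C·(E⟨X,t⟩²)²; consequently X satisfies the small-ball condition in Σ_n with constants u, β > 0 depending only on C. -/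
open MeasureTheory ProbabilityTheory Finset

lemma aux_integrable {Ω : Type} [MeasurableSpace Ω] {P : Measure Ω} [IsProbabilityMeasure P]
    {f : Ω → ℝ} (hm : Measurable f) {M : ℝ} (hb : ∀ᵐ ω ∂P, |f ω| ≤ M) : Integrable f P :=
  Integrable.mono' (integrable_const M) hm.aestronglyMeasurable
    (by simpa [Real.norm_eq_abs] using hb)

lemma aux_ae_two {Ω : Type} [MeasurableSpace Ω] {P : Measure Ω} [IsProbabilityMeasure P]
    {f : Ω → ℝ} (hm : Measurable f) {a b : ℝ} (hab : a ≠ b)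
    (h : P {ω | f ω = a} + P {ω | f ω = b} = 1) :
    ∀ᵐ ω ∂P, f ω = a ∨ f ω = b := by
  have hA : MeasurableSet {ω | f ω = a} := hm (measurableSet_singleton a)
  have hB : MeasurableSet {ω | f ω = b} := hm (measurableSet_singleton b)
  have hd : Disjoint {ω | f ω = a} {ω | f ω = b} := by
    rw [Set.disjoint_left]; rintro ω h1 h2; exact hab (h1.symm.trans h2)
  have hu : P ({ω | f ω = a} ∪ {ω | f ω = b}) = 1 := by
    rw [measure_union hd hB]; exact h
  have hc : P ({ω | f ω = a} ∪ {ω | f ω = b})ᶜ = 0 := by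
    rw [measure_compl (hA.union hB) (measure_ne_top _ _), hu]; simp
  have hs : {ω | ¬(f ω = a ∨ f ω = b)} = ({ω | f ω = a} ∪ {ω | f ω = b})ᶜ := by
    ext ω; simp [not_or]
  rw [ae_iff, hs]; exact hc

lemma aux_two_val {Ω : Type} [MeasurableSpace Ω] {P : Measure Ω} [IsProbabilityMeasure P]
    {f : Ω → ℝ} (hm : Measurable f) {a b : ℝ} (hab : a ≠ b)
    (h1 : ∀ᵐ ω ∂P, f ω = a ∨ f ω = b) :
    ∫ ω, f ω ∂P = a * (P {ω | f ω = a}).toReal + b * (P {ω | f ω = b}).toReal := by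
  have hA : MeasurableSet {ω | f ω = a} := hm (measurableSet_singleton a)
  have hB : MeasurableSet {ω | f ω = b} := hm (measurableSet_singleton b)
  have hcong : f =ᵐ[P] fun ω => Set.indicator {ω | f ω = a} (fun _ => a) ω
      + Set.indicator {ω | f ω = b} (fun _ => b) ω := by
    filter_upwards [h1] with ω hω
    simp only [Set.indicator_apply, Set.mem_setOf_eq]
    rcases hω with h | h <;> simp [h, hab, Ne.symm hab]
  rw [integral_congr_ae hcong, integral_add ((integrable_const a).indicator hA)
    ((integrable_const b).indicator hB), integral_indicator_const _ hA,
    integral_indicator_const _ hB]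
  simp [smul_eq_mul, Measure.real]; ring

lemma aux_indep {Ω : Type} [MeasurableSpace Ω] {P : Measure Ω} {n : ℕ}
    {ε η : Fin n → Ω → ℝ} (hε : ∀ j, Measurable (ε j)) (hη : ∀ j, Measurable (η j))
    (hind : iIndepFun (Sum.elim ε η) P)
    (R : ℝ) (t : Fin n → ℝ) (s : Finset (Fin n)) {j : Fin n} (hj : j ∉ s) :
    IndepFun (fun ω => ∑ i ∈ s, ε i ω * (1 + R * η i ω) * t i)
      (fun ω => ε j ω * (1 + R * η j ω) * t j) P := by
  classical
  set f : Fin n ⊕ Fin n → Ω → ℝ := Sum.elim ε η with hf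
  have hmeas : ∀ i, Measurable (f i) := by rintro (i | i); exacts [hε i, hη i]
  set S : Finset (Fin n ⊕ Fin n) := s.image Sum.inl ∪ s.image Sum.inr with hS
  set T : Finset (Fin n ⊕ Fin n) := {Sum.inl j, Sum.inr j} with hT
  have hST : Disjoint S T := by
    simp only [hS, hT, Finset.disjoint_left]
    rintro x hx
    simp only [Finset.mem_union, Finset.mem_image] at hx
    rcases hx with ⟨i, hi, rfl⟩ | ⟨i, hi, rfl⟩ <;>
      · simp only [Finset.mem_insert, Finset.mem_singleton]
        rintro (h | h) <;> simp_all
  have base := hind.indepFun_finset S T hST hmeas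
  have hmemS1 : ∀ i ∈ s, Sum.inl i ∈ S :=
    fun i hi => Finset.mem_union_left _ (Finset.mem_image_of_mem _ hi)
  have hmemS2 : ∀ i ∈ s, Sum.inr i ∈ S :=
    fun i hi => Finset.mem_union_right _ (Finset.mem_image_of_mem _ hi)
  set g : ((i : S) → ℝ) → ℝ := fun v =>
    ∑ i ∈ s.attach, v ⟨Sum.inl i.1, hmemS1 i.1 i.2⟩
      * (1 + R * v ⟨Sum.inr i.1, hmemS2 i.1 i.2⟩) * t i.1 with hg
  set h : ((i : T) → ℝ) → ℝ := fun v =>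
    v ⟨Sum.inl j, by simp [hT]⟩ * (1 + R * v ⟨Sum.inr j, by simp [hT]⟩) * t j with hh
  have hgm : Measurable g := by
    apply Finset.measurable_sum
    intro i _
    fun_prop
  have hhm : Measurable h := by fun_prop
  have key := base.comp hgm hhm
  have e1 : (g ∘ fun a (i : S) => f i a) = fun ω => ∑ i ∈ s, ε i ω * (1 + R * η i ω) * t i := by
    funext a
    simp only [Function.comp_apply, hg]
    rw [← Finset.sum_attach s (fun i => ε i a * (1 + R * η i a) * t i)]
    rfl
  have e2 : (h ∘ fun a (i : T) => f i a) = fun ω => ε j ω * (1 + R * η j ω) * t j := rfl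
  rw [e1, e2] at key
  exact key

set_option maxHeartbeats 3200000 in
/-- For `z = ε(1 + Rη)` with `ε` a symmetric sign, `η` Bernoulli(δ)
independent of `ε`, `R ≥ 1` and `R⁴δ ≤ 1`, the vector `X` of iid copies of `z` satisfies
`E⟨X,t⟩⁴ ≤ C (E⟨X,t⟩²)²` for all `t`, and consequently the small-ball condition in `Σ_n`
with constants `u, β` depending only on `C`. -/
theorem stmt19 :
    ∃ C : ℝ, 0 < C ∧ ∃ u β : ℝ, 0 < u ∧ 0 < β ∧
    ∀ (n : ℕ) (δ R : ℝ), 0 < δ → δ < 1 → 1 ≤ R → R ^ 4 * δ ≤ 1 →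
    ∀ (Ω : Type) [MeasurableSpace Ω] (P : Measure Ω) (ε η : Fin n → Ω → ℝ),
      IsProbabilityMeasure P →
      (∀ j, Measurable (ε j)) → (∀ j, Measurable (η j)) →
      -- the ε's are symmetric ±1 variables
      (∀ j, P {ω | ε j ω = 1} = 1 / 2 ∧ P {ω | ε j ω = -1} = 1 / 2) →
      -- the η's are {0,1}-valued with mean δ
      (∀ j, P {ω | η j ω = 1} = ENNReal.ofReal δ ∧
        P {ω | η j ω = 0} = ENNReal.ofReal (1 - δ)) →
      -- all the ε's and η's are jointly independent (so the coordinates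
      -- x_j = ε_j (1 + R η_j) of X are independent copies of z)
      iIndepFun (Sum.elim ε η) P →
      ∀ t : Fin n → ℝ,
        (∫ ω, (∑ j, ε j ω * (1 + R * η j ω) * t j) ^ 4 ∂P) ≤
          C * (∫ ω, (∑ j, ε j ω * (1 + R * η j ω) * t j) ^ 2 ∂P) ^ 2 ∧
        (t ≠ 0 →
          ENNReal.ofReal β ≤
            P {ω | u * l2norm t < |∑ j, ε j ω * (1 + R * η j ω) * t j|}) := by
  refine ⟨20, by norm_num, 1/2, 1/80, by norm_num, by norm_num, ?_⟩
  intro n δ R hδ0 hδ1 hR hRδ Ω _ P ε η hP hεm hηm hεd hηd hind t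
  classical
  have hR0 : (0:ℝ) < R := lt_of_lt_of_le one_pos hR
  set y : Fin n → Ω → ℝ := fun j ω => ε j ω * (1 + R * η j ω) * t j with hydef
  set m2 : ℝ := 1 + ((1+R)^2 - 1) * δ with hm2def
  set m4 : ℝ := 1 + ((1+R)^4 - 1) * δ with hm4def
  set T2 : ℝ := ∑ j, t j ^ 2 with hT2def
  have hgoal : ∀ ω : Ω, (∑ j, ε j ω * (1 + R * η j ω) * t j) = ∑ j, y j ω := fun ω => rfl
  simp only [hgoal]
  -- a.e. two-valued
  have hεae : ∀ j, ∀ᵐ ω ∂P, ε j ω = 1 ∨ ε j ω = -1 := fun j =>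
    aux_ae_two (hεm j) (by norm_num)
      (by rw [(hεd j).1, (hεd j).2]; exact ENNReal.add_halves 1)
  have hηae : ∀ j, ∀ᵐ ω ∂P, η j ω = 1 ∨ η j ω = 0 := fun j =>
    aux_ae_two (hηm j) (by norm_num)
      (by rw [(hηd j).1, (hηd j).2, ← ENNReal.ofReal_add hδ0.le (by linarith)]; norm_num)
  -- base integrals
  have Iε : ∀ j, ∫ ω, ε j ω ∂P = 0 := by
    intro j
    rw [aux_two_val (hεm j) (by norm_num) (hεae j), (hεd j).1, (hεd j).2]
    norm_num
  have Iη : ∀ j, ∫ ω, η j ω ∂P = δ := by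
    intro j
    rw [aux_two_val (hηm j) (by norm_num) (hηae j), (hηd j).1, (hηd j).2]
    rw [ENNReal.toReal_ofReal hδ0.le]
    ring
  -- bounds
  have hball : ∀ᵐ ω ∂P, ∀ j, (ε j ω = 1 ∨ ε j ω = -1) ∧ (η j ω = 1 ∨ η j ω = 0) :=
    (ae_all_iff).2 fun j => (hεae j).and (hηae j)
  have hyb : ∀ᵐ ω ∂P, ∀ j, |y j ω| ≤ (1+R) * |t j| := by
    filter_upwards [hball] with ω h j
    obtain ⟨he, hn⟩ := h j
    have : |y j ω| = |ε j ω| * (|1 + R * η j ω| * |t j|) := by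
      simp [hydef, abs_mul, mul_assoc]
    have h1 : |(1:ℝ)| = 1 := abs_one
    have h2 : |(-1:ℝ)| = 1 := by norm_num
    have h3 : |1 + R * (1:ℝ)| = 1 + R := by
      rw [mul_one, abs_of_pos] ; linarith
    have h4 : |1 + R * (0:ℝ)| = 1 := by norm_num
    rcases he with e | e <;> rcases hn with n | n <;> rw [this, e, n] <;>
      simp only [h1, h2, h3, h4, one_mul] <;>
      nlinarith [abs_nonneg (t j), mul_nonneg hR0.le (abs_nonneg (t j))]
  set B : ℝ := ∑ i, (1+R) * |t i| with hBdef
  have hB0 : 0 ≤ B := Finset.sum_nonneg fun i _ => by positivity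
  have hSb : ∀ᵐ ω ∂P, ∀ s : Finset (Fin n), |∑ i ∈ s, y i ω| ≤ B := by
    filter_upwards [hyb] with ω h s
    calc |∑ i ∈ s, y i ω| ≤ ∑ i ∈ s, |y i ω| := Finset.abs_sum_le_sum_abs _ _
    _ ≤ ∑ i ∈ s, (1+R) * |t i| := Finset.sum_le_sum fun i _ => h i
    _ ≤ B := Finset.sum_le_sum_of_subset_of_nonneg (Finset.subset_univ s)
        (fun i _ _ => by positivity)
  -- measurability
  have hym : ∀ j, Measurable (y j) := fun j =>
    ((hεm j).mul (measurable_const.add (measurable_const.mul (hηm j)))).mul measurable_const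
  have hSm : ∀ s : Finset (Fin n), Measurable (fun ω => ∑ i ∈ s, y i ω) := fun s =>
    Finset.measurable_sum s fun i _ => hym i
  -- integrability
  have hintS : ∀ (s : Finset (Fin n)) (a : ℕ),
      Integrable (fun ω => (∑ i ∈ s, y i ω) ^ a) P := by
    intro s a
    apply aux_integrable ((hSm s).pow_const a)
    filter_upwards [hSb] with ω h
    rw [abs_pow]
    exact pow_le_pow_left₀ (abs_nonneg _) (h s) a
  have hyB : ∀ᵐ ω ∂P, ∀ j, |y j ω| ≤ B := by
    filter_upwards [hyb] with ω h j
    exact le_trans (h j) (Finset.single_le_sum (f := fun i => (1+R) * |t i|)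
      (fun i _ => by positivity) (Finset.mem_univ j))
  have hintY : ∀ (j : Fin n) (b : ℕ), Integrable (fun ω => (y j ω) ^ b) P := by
    intro j b
    apply aux_integrable ((hym j).pow_const b)
    filter_upwards [hyB] with ω h
    rw [abs_pow]
    exact pow_le_pow_left₀ (abs_nonneg _) (h j) b
  have hintSY : ∀ (s : Finset (Fin n)) (a b : ℕ) (j : Fin n),
      Integrable (fun ω => (∑ i ∈ s, y i ω) ^ a * (y j ω) ^ b) P := by
    intro s a b j
    apply aux_integrable (((hSm s).pow_const a).mul ((hym j).pow_const b))
    filter_upwards [hSb, hyB] with ω h1 h2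
    simp only [Pi.mul_apply]
    rw [abs_mul, abs_pow, abs_pow]
    exact mul_le_mul (pow_le_pow_left₀ (abs_nonneg _) (h1 s) a)
      (pow_le_pow_left₀ (abs_nonneg _) (h2 j) b) (by positivity) (by positivity)
  -- moments of the η-part
  have hIη : ∀ (j : Fin n) (k : ℕ),
      ∫ ω, (1 + R * η j ω) ^ k ∂P = 1 + ((1+R)^k - 1) * δ := by
    intro j k
    have hηint : Integrable (η j) P := by
      apply aux_integrable (hηm j) (M := 1)
      filter_upwards [hηae j] with ω h
      rcases h with h | h <;> simp [h]
    have hcong : (fun ω => (1 + R * η j ω) ^ k)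
        =ᵐ[P] fun ω => 1 + ((1+R)^k - 1) * η j ω := by
      filter_upwards [hηae j] with ω h
      rcases h with h | h
      · rw [h, mul_one, mul_one]; ring
      · simp [h]
    rw [integral_congr_ae hcong,
      integral_add (integrable_const 1) (hηint.const_mul _), integral_const,
      integral_const_mul, Iη j]
    simp
  -- moments of ε
  have hεp : ∀ (j : Fin n) (k : ℕ),
      ∫ ω, (ε j ω) ^ k ∂P = if Even k then 1 else 0 := by
    intro j k
    by_cases hk : Even k
    · have hcong : (fun ω => (ε j ω) ^ k) =ᵐ[P] fun _ => (1:ℝ) := by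
        filter_upwards [hεae j] with ω h
        rcases h with h | h <;> simp [h, hk.neg_one_pow]
      rw [integral_congr_ae hcong]
      simp [hk]
    · have hcong : (fun ω => (ε j ω) ^ k) =ᵐ[P] fun ω => ε j ω := by
        filter_upwards [hεae j] with ω h
        rcases h with h | h <;> simp [h, (Nat.not_even_iff_odd.1 hk).neg_one_pow]
      rw [integral_congr_ae hcong, Iε j]
      simp [hk]
  -- moments of y
  have hprod : ∀ (j : Fin n) (k : ℕ),
      ∫ ω, (y j ω) ^ k ∂P
        = (∫ ω, (ε j ω) ^ k ∂P) * ((1 + ((1+R)^k - 1) * δ) * t j ^ k) := by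
    intro j k
    have hindj : IndepFun (ε j) (η j) P :=
      hind.indepFun (show (Sum.inl j : Fin n ⊕ Fin n) ≠ Sum.inr j by simp)
    have hc := hindj.comp (φ := fun x : ℝ => x ^ k)
      (ψ := fun x : ℝ => (1 + R * x) ^ k * t j ^ k)
      (measurable_id.pow_const k)
      (((measurable_const.add (measurable_const.mul measurable_id)).pow_const k).mul_const _)
    have hInt1 : Integrable (fun ω => (ε j ω) ^ k) P := by
      apply aux_integrable ((hεm j).pow_const k) (M := 1)
      filter_upwards [hεae j] with ω h
      rcases h with h | h <;> simp [h, abs_pow]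
    have hInt2 : Integrable (fun ω => (1 + R * η j ω) ^ k * t j ^ k) P := by
      apply aux_integrable
        (((measurable_const.add (measurable_const.mul (hηm j))).pow_const k).mul_const _)
      filter_upwards [hηae j] with ω h
      have hb : |(1 + R * η j ω) ^ k| ≤ (1+R)^k := by
        rcases h with h | h
        · rw [h, mul_one, abs_pow, abs_of_pos (by linarith : (0:ℝ) < 1 + R)]
        · rw [h, mul_zero, add_zero, abs_pow, abs_one, one_pow]
          exact one_le_pow₀ (by linarith)
      calc |(1 + R * η j ω) ^ k * t j ^ k| = |(1 + R * η j ω) ^ k| * |t j ^ k| :=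
            abs_mul _ _
        _ ≤ (1+R)^k * |t j ^ k| := mul_le_mul_of_nonneg_right hb (abs_nonneg _)
    have hmul := hc.integral_fun_mul_eq_mul_integral hInt1.aestronglyMeasurable hInt2.aestronglyMeasurable
    calc ∫ ω, (y j ω) ^ k ∂P
        = ∫ ω, (ε j ω) ^ k * ((1 + R * η j ω) ^ k * t j ^ k) ∂P := by
          apply integral_congr_ae (Filter.Eventually.of_forall fun ω => ?_)
          simp only [hydef]
          rw [mul_pow, mul_pow, mul_assoc]
      _ = (∫ ω, (ε j ω) ^ k ∂P) * (∫ ω, (1 + R * η j ω) ^ k * t j ^ k ∂P) := hmul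
      _ = (∫ ω, (ε j ω) ^ k ∂P) * ((1 + ((1+R)^k - 1) * δ) * t j ^ k) := by
          rw [integral_mul_const, hIη j k]
  have hy1p : ∀ j : Fin n, ∫ ω, (y j ω) ^ 1 ∂P = 0 := by
    intro j; rw [hprod j 1, hεp j 1]; norm_num
  have hy2p : ∀ j : Fin n, ∫ ω, (y j ω) ^ 2 ∂P = m2 * t j ^ 2 := by
    intro j; rw [hprod j 2, hεp j 2, if_pos (by decide : Even 2), hm2def]; ring
  have hy3p : ∀ j : Fin n, ∫ ω, (y j ω) ^ 3 ∂P = 0 := by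
    intro j; rw [hprod j 3, hεp j 3]; norm_num [Nat.even_iff]
  have hy4p : ∀ j : Fin n, ∫ ω, (y j ω) ^ 4 ∂P = m4 * t j ^ 4 := by
    intro j; rw [hprod j 4, hεp j 4, if_pos (by decide : Even 4), hm4def]; ring
  -- the key induction
  have key : ∀ s : Finset (Fin n),
      (∫ ω, (∑ i ∈ s, y i ω) ^ 2 ∂P) = m2 * ∑ i ∈ s, t i ^ 2 ∧
      (∫ ω, (∑ i ∈ s, y i ω) ^ 4 ∂P)
        = 3 * (m2 * ∑ i ∈ s, t i ^ 2) ^ 2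
          + ∑ i ∈ s, (m4 * t i ^ 4 - 3 * (m2 * t i ^ 2) ^ 2) := by
    intro s
    induction s using Finset.induction_on with
    | empty => simp
    | @insert j s hj ih =>
      obtain ⟨ih2, ih4⟩ := ih
      have indep : IndepFun (fun ω => ∑ i ∈ s, y i ω) (y j) P :=
        aux_indep hεm hηm hind R t s hj
      have haux : ∀ a b : ℕ, (∫ ω, (∑ i ∈ s, y i ω) ^ a * (y j ω) ^ b ∂P)
          = (∫ ω, (∑ i ∈ s, y i ω) ^ a ∂P) * (∫ ω, (y j ω) ^ b ∂P) :=
        fun a b => (indep.comp (measurable_id.pow_const a)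
          (measurable_id.pow_const b)).integral_fun_mul_eq_mul_integral (hintS s a).aestronglyMeasurable (hintY j b).aestronglyMeasurable
      have hA1 : (∫ ω, (∑ i ∈ s, y i ω) ^ 1 ∂P) = 0 := by
        simp only [pow_one]
        rw [integral_finset_sum s (fun i _ => by simpa using hintY i 1)]
        apply Finset.sum_eq_zero
        intro i _
        simpa using hy1p i
      have e2 : ∀ ω : Ω, (y j ω + ∑ i ∈ s, y i ω) ^ 2
          = (∑ i ∈ s, y i ω) ^ 2
            + (2 * ((∑ i ∈ s, y i ω) ^ 1 * (y j ω) ^ 1) + (y j ω) ^ 2) := by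
        intro ω; ring
      have e4 : ∀ ω : Ω, (y j ω + ∑ i ∈ s, y i ω) ^ 4
          = (∑ i ∈ s, y i ω) ^ 4
            + (4 * ((∑ i ∈ s, y i ω) ^ 3 * (y j ω) ^ 1)
              + (6 * ((∑ i ∈ s, y i ω) ^ 2 * (y j ω) ^ 2)
                + (4 * ((∑ i ∈ s, y i ω) ^ 1 * (y j ω) ^ 3) + (y j ω) ^ 4))) := by
        intro ω; ring
      have i11 := Integrable.const_mul (hintSY s 1 1 j) 2
      have i31 := Integrable.const_mul (hintSY s 3 1 j) 4
      have i22 := Integrable.const_mul (hintSY s 2 2 j) 6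
      have i13 := Integrable.const_mul (hintSY s 1 3 j) 4
      have g2 : Integrable (fun ω =>
          2 * ((∑ i ∈ s, y i ω) ^ 1 * (y j ω) ^ 1) + (y j ω) ^ 2) P :=
        i11.add (hintY j 2)
      have g13 : Integrable (fun ω =>
          4 * ((∑ i ∈ s, y i ω) ^ 1 * (y j ω) ^ 3) + (y j ω) ^ 4) P :=
        i13.add (hintY j 4)
      have g22 : Integrable (fun ω =>
          6 * ((∑ i ∈ s, y i ω) ^ 2 * (y j ω) ^ 2)
            + (4 * ((∑ i ∈ s, y i ω) ^ 1 * (y j ω) ^ 3) + (y j ω) ^ 4)) P :=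
        i22.add g13
      have g31 : Integrable (fun ω =>
          4 * ((∑ i ∈ s, y i ω) ^ 3 * (y j ω) ^ 1)
            + (6 * ((∑ i ∈ s, y i ω) ^ 2 * (y j ω) ^ 2)
              + (4 * ((∑ i ∈ s, y i ω) ^ 1 * (y j ω) ^ 3) + (y j ω) ^ 4))) P :=
        i31.add g22
      constructor
      · simp only [Finset.sum_insert hj, e2]
        rw [integral_add (hintS s 2) g2,
          integral_add i11 (hintY j 2),
          integral_const_mul, haux 1 1, hA1, ih2, hy2p j]
        ring
      · simp only [Finset.sum_insert hj, e4]
        rw [integral_add (hintS s 4) g31,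
          integral_add i31 g22,
          integral_add i22 g13,
          integral_add i13 (hintY j 4),
          integral_const_mul, integral_const_mul, integral_const_mul,
          haux 3 1, haux 2 2, haux 1 3,
          hA1, ih2, ih4, hy1p j, hy2p j, hy3p j, hy4p j]
        ring
  -- global quantities
  have hES2 : (∫ ω, (∑ j, y j ω) ^ 2 ∂P) = m2 * T2 := (key Finset.univ).1
  have hm2ge : 1 ≤ m2 := by
    have h : 0 ≤ ((1+R)^2 - 1) * δ := mul_nonneg (by nlinarith) hδ0.le
    rw [hm2def]; linarith
  have hm4le : m4 ≤ 17 := by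
    have hpow : (1+R)^4 ≤ (2*R)^4 :=
      pow_le_pow_left₀ (by linarith) (by linarith) 4
    have h16 : (1+R)^4 * δ ≤ 16 := by
      calc (1+R)^4 * δ ≤ (2*R)^4 * δ := mul_le_mul_of_nonneg_right hpow hδ0.le
        _ = 16 * (R^4 * δ) := by ring
        _ ≤ 16 := by linarith
    rw [hm4def]; nlinarith [hδ0.le, h16]
  have hT20 : 0 ≤ T2 := Finset.sum_nonneg fun i _ => sq_nonneg _
  have hT4 : ∑ j, t j ^ 4 ≤ T2 ^ 2 := by
    have h1 : ∑ j, t j ^ 4 = ∑ j, (t j ^ 2) ^ 2 :=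
      Finset.sum_congr rfl fun i _ => by ring
    rw [h1, hT2def]
    exact Finset.sum_sq_le_sq_sum_of_nonneg fun i _ => sq_nonneg _
  have hD : ∑ i, (m4 * t i ^ 4 - 3 * (m2 * t i ^ 2) ^ 2) ≤ 17 * T2 ^ 2 := by
    calc ∑ i, (m4 * t i ^ 4 - 3 * (m2 * t i ^ 2) ^ 2) ≤ ∑ i, m4 * t i ^ 4 :=
          Finset.sum_le_sum fun i _ => by nlinarith [sq_nonneg (m2 * t i ^ 2)]
      _ = m4 * ∑ i, t i ^ 4 := by rw [Finset.mul_sum]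
      _ ≤ 17 * ∑ i, t i ^ 4 := by
          apply mul_le_mul_of_nonneg_right hm4le
          exact Finset.sum_nonneg fun i _ => by positivity
      _ ≤ 17 * T2 ^ 2 := by linarith
  have hT2q : T2 ^ 2 ≤ (m2 * T2) ^ 2 := by
    have hm2sq : 1 ≤ m2 * m2 :=
      le_trans (by norm_num) (mul_le_mul hm2ge hm2ge zero_le_one
        (le_trans zero_le_one hm2ge))
    have h2 := mul_le_mul_of_nonneg_right hm2sq (mul_nonneg hT20 hT20)
    calc T2 ^ 2 = 1 * (T2 * T2) := by ring
      _ ≤ m2 * m2 * (T2 * T2) := h2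
      _ = (m2 * T2) ^ 2 := by ring
  have hES4le : (∫ ω, (∑ j, y j ω) ^ 4 ∂P) ≤ 20 * (m2 * T2) ^ 2 := by
    rw [(key Finset.univ).2]
    linarith [hD, hT2q]
  constructor
  · rw [hES2]; exact hES4le
  · intro ht
    have hT2pos : 0 < T2 := by
      obtain ⟨j, hj⟩ : ∃ j, t j ≠ 0 := by
        by_contra h; push_neg at h; exact ht (funext h)
      rw [hT2def]
      exact Finset.sum_pos' (fun i _ => sq_nonneg _)
        ⟨j, Finset.mem_univ j, by positivity⟩
    obtain ⟨q, hqdef⟩ : ∃ q : ℝ, q = m2 * T2 := ⟨_, rfl⟩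
    rw [← hqdef] at hES2 hES4le
    have hq : 0 < q := by
      rw [hqdef]; exact mul_pos (lt_of_lt_of_le one_pos hm2ge) hT2pos
    have hqT : T2 ≤ q := by
      rw [hqdef]
      calc T2 = 1 * T2 := (one_mul T2).symm
        _ ≤ m2 * T2 := mul_le_mul_of_nonneg_right hm2ge hT20
    set Aset : Set Ω := {ω | q/2 < (∑ i, y i ω) ^ 2} with hAdef
    have hAmeas : MeasurableSet Aset :=
      measurableSet_lt measurable_const ((hSm Finset.univ).pow_const 2)
    have hIprod : Integrable
        (fun ω => (∑ i, y i ω) ^ 2 * Set.indicator Aset (fun _ => (1:ℝ)) ω) P := by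
      apply aux_integrable (((hSm Finset.univ).pow_const 2).mul
        (measurable_const.indicator hAmeas))
      filter_upwards [hSb] with ω h
      simp only [Pi.mul_apply]
      rw [abs_mul, abs_pow]
      have hind1 : |Set.indicator Aset (fun _ => (1:ℝ)) ω| ≤ 1 := by
        rw [Set.indicator_apply]; split <;> norm_num
      calc |∑ i, y i ω| ^ 2 * |Set.indicator Aset (fun _ => (1:ℝ)) ω|
          ≤ B ^ 2 * 1 := mul_le_mul (pow_le_pow_left₀ (abs_nonneg _) (h Finset.univ) 2)
            hind1 (abs_nonneg _) (by positivity)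
        _ = B ^ 2 := mul_one _
    have step1 : q/2 ≤ ∫ ω, (∑ i, y i ω) ^ 2 * Set.indicator Aset (fun _ => (1:ℝ)) ω ∂P := by
      have hrhs1 : Integrable
          (fun ω => q/2 + (∑ i, y i ω) ^ 2 * Set.indicator Aset (fun _ => (1:ℝ)) ω) P :=
        (integrable_const _).add hIprod
      have hmono : (∫ ω, (∑ i, y i ω) ^ 2 ∂P)
          ≤ ∫ ω, (q/2 + (∑ i, y i ω) ^ 2 * Set.indicator Aset (fun _ => (1:ℝ)) ω) ∂P := by
        apply integral_mono (hintS Finset.univ 2) hrhs1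
        intro ω
        dsimp only
        by_cases hω : ω ∈ Aset
        · rw [Set.indicator_of_mem hω]
          simp only [mul_one]
          linarith [hq]
        · rw [Set.indicator_of_notMem hω]
          have : ¬ (q/2 < (∑ i, y i ω) ^ 2) := hω
          push_neg at this
          simpa using this
      rw [integral_add (integrable_const _) hIprod, integral_const] at hmono
      rw [hES2] at hmono
      simp only [measure_univ, probReal_univ, ENNReal.toReal_one, one_smul] at hmono
      linarith
    have h80 : (0:ℝ) < 80 * q := by linarith
    have step2 : (∫ ω, (∑ i, y i ω) ^ 2 * Set.indicator Aset (fun _ => (1:ℝ)) ω ∂P)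
        ≤ (∫ ω, (∑ i, y i ω) ^ 4 ∂P) / (80*q) + (P Aset).toReal * (20*q) := by
      have hpt : ∀ x : ℝ, q/2 < x^2 → x^2 ≤ x^4/(80*q) + 20*q := by
        intro x hx
        rw [div_add' _ _ _ h80.ne', le_div_iff₀ h80]
        nlinarith [sq_nonneg (x^2 - 40*q)]
      have hpt0 : ∀ x : ℝ, (0:ℝ) ≤ x^4/(80*q) := by
        intro x; positivity
      have hptle : ∀ ω, (∑ i, y i ω) ^ 2 * Set.indicator Aset (fun _ => (1:ℝ)) ω
          ≤ (∑ i, y i ω) ^ 4 / (80*q) + Set.indicator Aset (fun _ => 20*q) ω := by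
        intro ω
        by_cases hω : ω ∈ Aset
        · rw [Set.indicator_of_mem hω, Set.indicator_of_mem hω, mul_one]
          exact hpt _ hω
        · rw [Set.indicator_of_notMem hω, Set.indicator_of_notMem hω]
          simpa using hpt0 (∑ i, y i ω)
      have hrhs2 : Integrable
          (fun ω => (∑ i, y i ω) ^ 4 / (80*q) + Set.indicator Aset (fun _ => 20*q) ω) P :=
        ((hintS Finset.univ 4).div_const _).add ((integrable_const _).indicator hAmeas)
      have hle2 := integral_mono hIprod hrhs2 hptle
      rwa [integral_add ((hintS Finset.univ 4).div_const _)
        ((integrable_const _).indicator hAmeas), integral_div,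
        integral_indicator_const _ hAmeas, smul_eq_mul] at hle2
    have hS4q : (∫ ω, (∑ i, y i ω) ^ 4 ∂P) / (80*q) ≤ q/4 := by
      rw [div_le_iff₀ h80]
      calc (∫ ω, (∑ i, y i ω) ^ 4 ∂P) ≤ 20 * q ^ 2 := hES4le
        _ = q/4 * (80*q) := by ring
    have hp : (1:ℝ)/80 ≤ (P Aset).toReal := by
      by_contra hcon
      push_neg at hcon
      have h1 : q/2 ≤ q/4 + (P Aset).toReal * (20*q) := by linarith [step1, step2, hS4q]
      nlinarith [mul_lt_mul_of_pos_right hcon (by linarith : (0:ℝ) < 20*q)]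
    have hsub : Aset ⊆ {ω | 1/2 * l2norm t < |∑ j, y j ω|} := by
      intro ω hω
      have hx : q/2 < (∑ i, y i ω) ^ 2 := hω
      have hl2 : (l2norm t) ^ 2 = T2 := by
        rw [show l2norm t = Real.sqrt T2 from rfl]
        exact Real.sq_sqrt hT20
      have hlt : (1/2 * l2norm t) ^ 2 < |∑ j, y j ω| ^ 2 := by
        rw [sq_abs, mul_pow, hl2]
        linarith [hx, hqT, hq]
      exact lt_of_pow_lt_pow_left₀ 2 (abs_nonneg _) hlt
    calc ENNReal.ofReal (1/80) ≤ P Aset :=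
          ENNReal.ofReal_le_of_le_toReal hp
      _ ≤ P {ω | 1/2 * l2norm t < |∑ j, y j ω|} := measure_mono hsub
end
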